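/- arXiv:math/0004028 — 5 statements merged into one kernel-verified Lean document; each statement's English description precedes it below -/
import Mathlib

section
/- Let (a_k)_{k∈ℕ} be a sequence of complex numbers such that the series ∑_{k=0}^∞ a_k converges in ℂ and ∑_{k=0}^∞ |a_k|² < ∞. Let Ω := {z ∈ ℂ : a_k·z ≠ 1 for all k ∈ ℕ}. Then: (a) for every z ∈ Ω the series ∑_{k=0}^∞ a_k/(1 − a_k·z) converges in ℂ; (b) the set {1/a_k : k ∈ ℕ, a_k ≠ 0} is closed and discrete in ℂ (so Ω is open); and (c) the function f : Ω → ℂ defined by f(z) = ∑_{k=0}^∞ a_k/(1 − a_k·z) is complex-differentiable at every point of Ω. -/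
/-!
Since `∑ aₖ` converges, `aₖ → 0`. Splitting `aₖ / (1 - aₖ z) = aₖ + aₖ² z / (1 - aₖ z)`, the
second series is dominated on `‖z‖ ≤ R`, for all large `k`, by `2 R ‖aₖ‖²`; hence it converges
locally uniformly on `Ω` and its sum is holomorphic there. The poles `1 / aₖ` tend to infinity,
so every compact set contains only finitely many of them.
-/

open Filter Topology Set

theorem isClosed_and_isDiscrete_range_of_tendsto_cofinite_cocompact {ι X : Type*}
    [TopologicalSpace X] [T1Space X] [WeaklyLocallyCompactSpace X] {u : ι → X}
    (hu : Tendsto u cofinite (cocompact X)) : IsClosed (range u) ∧ IsDiscrete (range u) := by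
  refine isClosed_and_discrete_iff.2 fun x => disjoint_principal_right.2 ?_
  obtain ⟨K, hK, hKx⟩ := exists_compact_mem_nhds x
  have hfin : ((K ∩ range u) \ {x}).Finite :=
    (((tendsto_cofinite_cocompact_iff.1 hu K hK).image u).subset
      (by rintro _ ⟨hy, k, rfl⟩; exact ⟨k, hy, rfl⟩)).sdiff
  rw [mem_nhdsWithin_iff_eventually]
  filter_upwards [hKx, hfin.isClosed.isOpen_compl.mem_nhds (by simp)] with y hyK hyF hyx hyu
  exact hyF ⟨⟨hyK, hyu⟩, hyx⟩

theorem tendsto_cofinite_cocompact_inv_of_tendsto_zero {𝕜 : Type*} [NormedField 𝕜]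
    [ProperSpace 𝕜] {a : ℕ → 𝕜} (h : Tendsto a atTop (𝓝 0)) :
    Tendsto (fun k : {k // a k ≠ 0} => (a k)⁻¹) cofinite (cocompact 𝕜) := by
  rw [← Metric.cobounded_eq_cocompact]
  refine tendsto_inv₀_nhdsNE_zero.comp (tendsto_nhdsWithin_iff.2 ⟨?_, .of_forall fun k => k.2⟩)
  rw [← Nat.cofinite_eq_atTop] at h
  exact h.comp Subtype.val_injective.tendsto_cofinite

theorem tendsto_zero_of_tendsto_sum_range {E : Type*} [NormedAddCommGroup E] {a : ℕ → E} {S : E}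
    (h : Tendsto (fun N => ∑ k ∈ Finset.range N, a k) atTop (𝓝 S)) :
    Tendsto a atTop (𝓝 0) := by
  simpa [Finset.sum_range_succ] using (h.comp (tendsto_add_atTop_nat 1)).sub h

theorem norm_sq_mul_div_one_sub_mul_le {w z : ℂ} {R : ℝ} (hz : ‖z‖ ≤ R) (hw : ‖w‖ * R ≤ 1 / 2) :
    ‖w ^ 2 * z / (1 - w * z)‖ ≤ 2 * R * ‖w‖ ^ 2 := by
  have hwz : ‖w * z‖ ≤ 1 / 2 := by
    rw [norm_mul]; exact (mul_le_mul_of_nonneg_left hz (norm_nonneg w)).trans hw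
  have hden : 1 / 2 ≤ ‖1 - w * z‖ := by
    have := norm_sub_norm_le (1 : ℂ) (w * z)
    rw [norm_one] at this; linarith
  rw [norm_div, norm_mul, norm_pow, div_le_iff₀ (by linarith)]
  have hR : 0 ≤ 2 * R * ‖w‖ ^ 2 := by have := (norm_nonneg z).trans hz; positivity
  calc ‖w‖ ^ 2 * ‖z‖ ≤ 2 * R * ‖w‖ ^ 2 * (1 / 2) := by
        nlinarith [mul_le_mul_of_nonneg_left hz (sq_nonneg ‖w‖)]
    _ ≤ 2 * R * ‖w‖ ^ 2 * ‖1 - w * z‖ := mul_le_mul_of_nonneg_left hden hR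

theorem div_one_sub_mul_eq_add {w z : ℂ} (h : w * z ≠ 1) :
    w / (1 - w * z) = w + w ^ 2 * z / (1 - w * z) := by
  have : 1 - w * z ≠ 0 := sub_ne_zero.2 h.symm
  field_simp
  ring

theorem mul_eq_one_iff_ne_zero_and_eq_inv {w z : ℂ} : w * z = 1 ↔ w ≠ 0 ∧ z = w⁻¹ := by
  refine ⟨fun h => ⟨left_ne_zero_of_mul_eq_one h, eq_inv_of_mul_eq_one_right h⟩, ?_⟩
  rintro ⟨hw, rfl⟩
  exact mul_inv_cancel₀ hw

section

variable {a : ℕ → ℂ}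

theorem eventually_norm_sq_mul_div_one_sub_mul_le (h0 : Tendsto a atTop (𝓝 0)) (R : ℝ) :
    ∀ᶠ k in atTop, ∀ z : ℂ, ‖z‖ ≤ R → ‖a k ^ 2 * z / (1 - a k * z)‖ ≤ 2 * R * ‖a k‖ ^ 2 := by
  have : Tendsto (fun k => ‖a k‖ * R) atTop (𝓝 0) := by simpa using h0.norm.mul_const R
  filter_upwards [this.eventually (eventually_le_nhds (by norm_num : (0 : ℝ) < 1 / 2))]
    with k hk z hz using norm_sq_mul_div_one_sub_mul_le hz hk

theorem summable_sq_mul_div_one_sub_mul (hsq : Summable fun k => ‖a k‖ ^ 2)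
    (h0 : Tendsto a atTop (𝓝 0)) (z : ℂ) :
    Summable fun k => a k ^ 2 * z / (1 - a k * z) :=
  .of_norm_bounded_eventually_nat (hsq.mul_left (2 * ‖z‖))
    ((eventually_norm_sq_mul_div_one_sub_mul_le h0 ‖z‖).mono fun _ hk => hk z le_rfl)

theorem differentiableOn_tsum_sq_mul_div_one_sub_mul (hsq : Summable fun k => ‖a k‖ ^ 2)
    (h0 : Tendsto a atTop (𝓝 0)) {s : Set ℂ} (hs : IsOpen s) (hpole : ∀ z ∈ s, ∀ k, a k * z ≠ 1) :
    DifferentiableOn ℂ (fun z => ∑' k, a k ^ 2 * z / (1 - a k * z)) s := by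
  have hunif : SummableLocallyUniformlyOn (fun k z => a k ^ 2 * z / (1 - a k * z)) s := by
    refine .of_locally_bounded_eventually hs fun K _ hK => ?_
    obtain ⟨R, hR⟩ := hK.isBounded.subset_closedBall 0
    refine ⟨fun k => 2 * R * ‖a k‖ ^ 2, hsq.mul_left _, ?_⟩
    rw [Nat.cofinite_eq_atTop]
    filter_upwards [eventually_norm_sq_mul_div_one_sub_mul_le h0 R] with k hk z hz
    exact hk z (mem_closedBall_zero_iff.1 (hR hz))
  refine hunif.differentiableOn hs fun k z hz => ?_
  exact (by fun_prop : DifferentiableAt ℂ (fun z => a k ^ 2 * z) z).div (by fun_prop)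
    (sub_ne_zero.2 (hpole z hz k).symm)

end

/-- Lemma 4.1 (first part): if `∑ a_k` converges and `∑ |a_k|² < ∞`, then the series
`∑ a_k / (1 - a_k z)` converges for all `z` with `a_k z ≠ 1`, the set of poles
`{1/a_k : a_k ≠ 0}` is closed and discrete (so the domain is open), and the limit
function is complex-differentiable on the domain. -/
theorem stmt_0 (a : ℕ → ℂ)
    (hconv : ∃ S : ℂ, Tendsto (fun N => ∑ k ∈ Finset.range N, a k) atTop (𝓝 S))
    (hsq : Summable fun k => ‖a k‖ ^ 2) :
    (∀ z : ℂ, (∀ k, a k * z ≠ 1) →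
      ∃ L : ℂ, Tendsto (fun N => ∑ k ∈ Finset.range N, a k / (1 - a k * z)) atTop (𝓝 L)) ∧
    (IsClosed {w : ℂ | ∃ k, a k ≠ 0 ∧ w = (a k)⁻¹} ∧
      DiscreteTopology {w : ℂ | ∃ k, a k ≠ 0 ∧ w = (a k)⁻¹} ∧
      IsOpen {z : ℂ | ∀ k, a k * z ≠ 1}) ∧
    (∃ f : ℂ → ℂ,
      (∀ z : ℂ, (∀ k, a k * z ≠ 1) →
        Tendsto (fun N => ∑ k ∈ Finset.range N, a k / (1 - a k * z)) atTop (𝓝 (f z))) ∧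
      (∀ z : ℂ, (∀ k, a k * z ≠ 1) → DifferentiableAt ℂ f z)) := by
  obtain ⟨S, hS⟩ := hconv
  have h0 := tendsto_zero_of_tendsto_sum_range hS
  have hpoles : {w : ℂ | ∃ k, a k ≠ 0 ∧ w = (a k)⁻¹} = range fun k : {k // a k ≠ 0} => (a k)⁻¹ := by
    ext w; simp [eq_comm]
  have hΩ : {z : ℂ | ∀ k, a k * z ≠ 1} = {w : ℂ | ∃ k, a k ≠ 0 ∧ w = (a k)⁻¹}ᶜ := by
    ext z; simp [mul_eq_one_iff_ne_zero_and_eq_inv]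
  obtain ⟨hclosed, hdiscrete⟩ := hpoles ▸
    isClosed_and_isDiscrete_range_of_tendsto_cofinite_cocompact
      (tendsto_cofinite_cocompact_inv_of_tendsto_zero h0)
  have hopen : IsOpen {z : ℂ | ∀ k, a k * z ≠ 1} := hΩ ▸ hclosed.isOpen_compl
  let f z := S + ∑' k, a k ^ 2 * z / (1 - a k * z)
  have hf : ∀ z : ℂ, (∀ k, a k * z ≠ 1) →
      Tendsto (fun N => ∑ k ∈ Finset.range N, a k / (1 - a k * z)) atTop (𝓝 (f z)) := by
    intro z hz
    simp only [div_one_sub_mul_eq_add (hz _), Finset.sum_add_distrib]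
    exact hS.add (summable_sq_mul_div_one_sub_mul hsq h0 z).hasSum.tendsto_sum_nat
  refine ⟨fun z hz => ⟨f z, hf z hz⟩, ⟨hclosed, hdiscrete.to_subtype, hopen⟩, f, hf,
    fun z hz => ?_⟩
  exact ((differentiableOn_tsum_sq_mul_div_one_sub_mul hsq h0 hopen fun _ hz => hz).differentiableAt
    (hopen.mem_nhds hz)).const_add S
end

section
/- Let a, a′ : ℕ → ℝ be nonincreasing sequences of nonnegative reals and b, b′ : ℕ → ℝ nondecreasing sequences of nonpositive reals such that the partial sums ∑_{k<N}(a_k + b_k) converge to S ∈ ℝ and ∑_{k<N}(a′_k + b′_k) converge to S′ ∈ ℝ as N → ∞. Let c : ℕ → ℝ be a nonincreasing sequence and d : ℕ → ℝ a nondecreasing sequence that enumerate, with multiplicity, the disjoint union of the terms of a and a′, respectively of b and b′; that is, there are bijections σ, τ : ℕ → ℕ ⊕ ℕ with c_k = (Sum.elim a a′)(σ k) and d_k = (Sum.elim b b′)(τ k) for all k. Then ∑_{k<N}(c_k + d_k) → S + S′ as N → ∞. -/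
/-!
Cut the merged sums at `N`. Of `c 0, …, c (N-1)`, say `m` come from `a` and `n = N - m` from `a'`;
since `a` and `a'` are nonincreasing, their sum is at most that of the first `m` terms of `a` and
the first `n` of `a'`. Conversely, as `d` is nondecreasing, `d 0, …, d (N-1)` sum to at most any
`N` of its terms, in particular the first `m` of `b` and the first `n` of `b'`. Hence the partial
sum of `c + d` at `N` is bounded above by `∑_{k<m} (a k + b k) + ∑_{k<n} (a' k + b' k)`, and
symmetrically (splitting by `τ`) from below. Both counts tend to infinity with `N`, so both
bounds tend to `S + S'`.
-/

open Filter Topology Finset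

section Merge

variable {M : Type*} [AddCommMonoid M] [PartialOrder M] [IsOrderedAddMonoid M]

theorem Antitone.sum_le_sum_range_card {f : ℕ → M} (hf : Antitone f) (s : Finset ℕ) :
    ∑ i ∈ s, f i ≤ ∑ i ∈ range #s, f i := by
  induction s using Finset.induction_on_max with
  | empty => simp
  | insert m s hm ih =>
    have hms : m ∉ s := fun h => lt_irrefl m (hm m h)
    have hcard : #s ≤ m := by simpa using card_le_card fun x hx => mem_range.2 (hm x hx)
    rw [sum_insert hms, card_insert_of_notMem hms, sum_range_succ, add_comm]
    exact add_le_add ih (hf hcard)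

variable (e : ℕ ≃ ℕ ⊕ ℕ)

def leftCount (N : ℕ) : ℕ := #((range N).map e.toEmbedding).toLeft

def rightCount (N : ℕ) : ℕ := #((range N).map e.toEmbedding).toRight

theorem leftCount_add_rightCount (N : ℕ) : leftCount e N + rightCount e N = N := by
  simp [leftCount, rightCount, card_toLeft_add_card_toRight]

theorem rightCount_eq_leftCount_trans_sumComm :
    rightCount e = leftCount (e.trans (Equiv.sumComm ℕ ℕ)) := by
  ext N
  simp only [rightCount, leftCount, Equiv.trans_toEmbedding, ← Finset.map_map, toLeft_map_sumComm]

theorem tendsto_leftCount : Tendsto (leftCount e) atTop atTop := by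
  refine tendsto_atTop.2 fun m => ?_
  have hlarge : ∀ᶠ N in atTop, ∀ i ∈ range m, e.symm (.inl i) < N :=
    (eventually_all_finset _).2 fun i _ => eventually_gt_atTop _
  filter_upwards [hlarge] with N hN
  simpa [leftCount] using card_le_card (s := range m) (t := ((range N).map e.toEmbedding).toLeft)
    fun i hi => by simpa using hN i hi

theorem tendsto_rightCount : Tendsto (rightCount e) atTop atTop := by
  rw [rightCount_eq_leftCount_trans_sumComm]
  exact tendsto_leftCount _

variable {a a' c : ℕ → M} {e}

theorem sum_range_merge_le (ha : Antitone a) (ha' : Antitone a')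
    (hc : ∀ k, c k = Sum.elim a a' (e k)) (N : ℕ) :
    ∑ k ∈ range N, c k ≤ ∑ k ∈ range (leftCount e N), a k + ∑ k ∈ range (rightCount e N), a' k := by
  calc ∑ k ∈ range N, c k = ∑ s ∈ (range N).map e.toEmbedding, Sum.elim a a' s := by
        simp [hc]
    _ = ∑ i ∈ ((range N).map e.toEmbedding).toLeft, a i
          + ∑ i ∈ ((range N).map e.toEmbedding).toRight, a' i :=
        sum_sum_eq_sum_toLeft_add_sum_toRight _ _
    _ ≤ _ := add_le_add (ha.sum_le_sum_range_card _) (ha'.sum_le_sum_range_card _)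

theorem le_sum_range_merge (hc : Antitone c) (hce : ∀ k, c k = Sum.elim a a' (e k)) (m n : ℕ) :
    ∑ k ∈ range m, a k + ∑ k ∈ range n, a' k ≤ ∑ k ∈ range (m + n), c k := by
  calc ∑ k ∈ range m, a k + ∑ k ∈ range n, a' k
      = ∑ s ∈ (range m).disjSum (range n), Sum.elim a a' s := (sum_sumElim _ _ _ _).symm
    _ = ∑ k ∈ ((range m).disjSum (range n)).map e.symm.toEmbedding, c k := by simp [hce]
    _ ≤ ∑ k ∈ range (m + n), c k := (hc.sum_le_sum_range_card _).trans_eq (by simp)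

end Merge

theorem stmt_4_general (a a' b b' c d : ℕ → ℝ) (S S' : ℝ)
    (ha : Antitone a) (ha' : Antitone a') (hb : Monotone b) (hb' : Monotone b')
    (hS : Tendsto (fun N => ∑ k ∈ Finset.range N, (a k + b k)) atTop (𝓝 S))
    (hS' : Tendsto (fun N => ∑ k ∈ Finset.range N, (a' k + b' k)) atTop (𝓝 S'))
    (hc : Antitone c) (hd : Monotone d)
    (σ : ℕ ≃ (ℕ ⊕ ℕ)) (τ : ℕ ≃ (ℕ ⊕ ℕ))
    (hcσ : ∀ k, c k = Sum.elim a a' (σ k))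
    (hdτ : ∀ k, d k = Sum.elim b b' (τ k)) :
    Tendsto (fun N => ∑ k ∈ Finset.range N, (c k + d k)) atTop (𝓝 (S + S')) := by
  have upper N : ∑ k ∈ range N, (c k + d k) ≤
      ∑ k ∈ range (leftCount σ N), (a k + b k) + ∑ k ∈ range (rightCount σ N), (a' k + b' k) := by
    have hc_le := sum_range_merge_le ha ha' hcσ N
    -- `d`, `b`, `b'` are antitone as maps into `ℝᵒᵈ`, where the merge inequalities reverse.
    have hd_le : ∑ k ∈ range N, d k ≤
        ∑ k ∈ range (leftCount σ N), b k + ∑ k ∈ range (rightCount σ N), b' k := by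
      have := le_sum_range_merge (M := ℝᵒᵈ) (c := d) hd.dual_right hdτ (leftCount σ N)
        (rightCount σ N)
      rwa [leftCount_add_rightCount] at this
    simp only [sum_add_distrib]
    linarith
  have lower N : ∑ k ∈ range (leftCount τ N), (a k + b k) +
      ∑ k ∈ range (rightCount τ N), (a' k + b' k) ≤ ∑ k ∈ range N, (c k + d k) := by
    have hc_ge := le_sum_range_merge hc hcσ (leftCount τ N) (rightCount τ N)
    have hd_ge : ∑ k ∈ range (leftCount τ N), b k + ∑ k ∈ range (rightCount τ N), b' k ≤
        ∑ k ∈ range N, d k :=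
      sum_range_merge_le (M := ℝᵒᵈ) (c := d) hb.dual_right hb'.dual_right hdτ N
    rw [leftCount_add_rightCount] at hc_ge
    simp only [sum_add_distrib]
    linarith
  exact tendsto_of_tendsto_of_tendsto_of_le_of_le
    ((hS.comp (tendsto_leftCount τ)).add (hS'.comp (tendsto_rightCount τ)))
    ((hS.comp (tendsto_leftCount σ)).add (hS'.comp (tendsto_rightCount σ))) lower upper

/-- Lemma 4.4: additivity of the regularized trace, at the level of eigenvalue sequences.
If `c` (nonincreasing) and `d` (nondecreasing) are monotone merges of `a, a'` and `b, b'`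
respectively, and `∑ (a_k + b_k) → S`, `∑ (a'_k + b'_k) → S'`, then `∑ (c_k + d_k) → S + S'`. -/
theorem stmt_4 (a a' b b' c d : ℕ → ℝ) (S S' : ℝ)
    (ha : Antitone a) (ha0 : ∀ k, 0 ≤ a k)
    (ha' : Antitone a') (ha'0 : ∀ k, 0 ≤ a' k)
    (hb : Monotone b) (hb0 : ∀ k, b k ≤ 0)
    (hb' : Monotone b') (hb'0 : ∀ k, b' k ≤ 0)
    (hS : Tendsto (fun N => ∑ k ∈ Finset.range N, (a k + b k)) atTop (𝓝 S))
    (hS' : Tendsto (fun N => ∑ k ∈ Finset.range N, (a' k + b' k)) atTop (𝓝 S'))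
    (hc : Antitone c) (hd : Monotone d)
    (σ : ℕ ≃ (ℕ ⊕ ℕ)) (τ : ℕ ≃ (ℕ ⊕ ℕ))
    (hcσ : ∀ k, c k = Sum.elim a a' (σ k))
    (hdτ : ∀ k, d k = Sum.elim b b' (τ k)) :
    Tendsto (fun N => ∑ k ∈ Finset.range N, (c k + d k)) atTop (𝓝 (S + S')) :=
  stmt_4_general a a' b b' c d S S' ha ha' hb hb' hS hS' hc hd σ τ hcσ hdτ
end

section
/- Let λ, μ : ℕ → ℝ be sequences with λ nonincreasing, λ_i ≥ 0, λ_i → 0, and μ nondecreasing, μ_i ≤ 0, μ_i → 0. For each N ∈ ℕ let λ^N, μ^N : ℕ → ℝ be sequences such that the series ∑_{i=0}^∞ (λ^N_i + μ^N_i) converges, say to t_N, and such that for all N and all i ≥ 1: λ_{i+1} ≤ λ^N_i ≤ λ_{i−1} and μ_{i−1} ≤ μ^N_i ≤ μ_{i+1}. Assume moreover that for each fixed i, λ^N_i → λ_i and μ^N_i → μ_i as N → ∞. Then the series ∑_{i=0}^∞ (λ_i + μ_i) converges, and t_N → ∑_{i=0}^∞ (λ_i + μ_i) as N → ∞. -/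
open Filter Topology

private lemma tele (g : ℕ → ℝ) {M M' : ℕ} (h : M ≤ M') :
    ∑ i ∈ Finset.Ico M M', (g (i + 1) - g i) = g M' - g M := by
  rw [Finset.sum_Ico_eq_sub _ h, Finset.sum_range_sub, Finset.sum_range_sub]
  ring

private lemma tele' (g : ℕ → ℝ) {M M' : ℕ} (h : M ≤ M') :
    ∑ i ∈ Finset.Ico M M', (g i - g (i + 1)) = g M - g M' := by
  rw [Finset.sum_Ico_eq_sub _ h, Finset.sum_range_sub', Finset.sum_range_sub']
  ring

private lemma key (lam mu : ℕ → ℝ) (hlam : Antitone lam) (hlam0 : ∀ i, 0 ≤ lam i)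
    (hmu : Monotone mu) (hmu0 : ∀ i, mu i ≤ 0) (b : ℕ → ℝ)
    (hb : ∀ i, 1 ≤ i → lam (i + 1) + mu (i - 1) ≤ b i ∧ b i ≤ lam (i - 1) + mu (i + 1))
    {M M' : ℕ} (hM : 1 ≤ M) (hMM : M ≤ M') :
    |∑ i ∈ Finset.Ico M M', b i - ∑ i ∈ Finset.Ico M M', (lam i + mu i)|
      ≤ lam (M - 1) - mu (M - 1) := by
  have hgl : ∑ i ∈ Finset.Ico M M', (lam (i - 1) - lam i) = lam (M - 1) - lam (M' - 1) := by
    have := tele' (fun i => lam (i - 1)) hMM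
    simpa using this
  have hgm : ∑ i ∈ Finset.Ico M M', (mu i - mu (i - 1)) = mu (M' - 1) - mu (M - 1) := by
    have := tele (fun i => mu (i - 1)) hMM
    simpa using this
  have hl2 : ∑ i ∈ Finset.Ico M M', (lam i - lam (i + 1)) = lam M - lam M' := tele' lam hMM
  have hm2 : ∑ i ∈ Finset.Ico M M', (mu (i + 1) - mu i) = mu M' - mu M := tele mu hMM
  rw [← Finset.sum_sub_distrib, abs_le]
  constructor
  · have h1 : ∑ i ∈ Finset.Ico M M', (-(lam i - lam (i + 1)) - (mu i - mu (i - 1)))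
        ≤ ∑ i ∈ Finset.Ico M M', (b i - (lam i + mu i)) := by
      apply Finset.sum_le_sum
      intro i hi
      have hi1 : 1 ≤ i := hM.trans (Finset.mem_Ico.1 hi).1
      linarith [(hb i hi1).1]
    have h2 : ∑ i ∈ Finset.Ico M M', (-(lam i - lam (i + 1)) - (mu i - mu (i - 1)))
        = -(lam M - lam M') - (mu (M' - 1) - mu (M - 1)) := by
      rw [← hl2, ← hgm, ← Finset.sum_neg_distrib, ← Finset.sum_sub_distrib]
    rw [h2] at h1
    have := hlam0 M'
    have := hmu0 (M' - 1)
    have := hlam (Nat.sub_le M 1)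
    linarith
  · have h1 : ∑ i ∈ Finset.Ico M M', (b i - (lam i + mu i))
        ≤ ∑ i ∈ Finset.Ico M M', ((lam (i - 1) - lam i) + (mu (i + 1) - mu i)) := by
      apply Finset.sum_le_sum
      intro i hi
      have hi1 : 1 ≤ i := hM.trans (Finset.mem_Ico.1 hi).1
      linarith [(hb i hi1).2]
    rw [Finset.sum_add_distrib, hgl, hm2] at h1
    have := hlam0 (M' - 1)
    have := hmu0 M'
    have := hmu (Nat.sub_le M 1)
    linarith

private lemma main (S : ℕ → ℕ → ℝ) (Si : ℕ → ℝ) (c : ℕ → ℝ) (t : ℕ → ℝ)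
    (hc0 : Tendsto c atTop (𝓝 0))
    (hkey : ∀ N M M', 1 ≤ M → M ≤ M' → |(S N M' - S N M) - (Si M' - Si M)| ≤ c M)
    (hconv : ∀ N, Tendsto (S N) atTop (𝓝 (t N)))
    (hfin : ∀ M, Tendsto (fun N => S N M) atTop (𝓝 (Si M))) :
    ∃ T : ℝ, Tendsto Si atTop (𝓝 T) ∧ Tendsto t atTop (𝓝 T) := by
  have hSicau : CauchySeq Si := by
    rw [Metric.cauchySeq_iff']
    intro ε hε
    obtain ⟨M₁, hM₁⟩ := Metric.cauchySeq_iff.1 (hconv 0).cauchySeq (ε / 2) (by linarith)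
    obtain ⟨M₂, hM₂⟩ := Metric.tendsto_atTop.1 hc0 (ε / 2) (by linarith)
    refine ⟨max 1 (max M₁ M₂), fun n hn => ?_⟩
    set M := max 1 (max M₁ M₂) with hMdef
    have hM1 : 1 ≤ M := le_max_left _ _
    have h1 := hkey 0 M n hM1 hn
    have h2 : dist (S 0 n) (S 0 M) < ε / 2 :=
      hM₁ n (le_trans (le_trans (le_max_left M₁ M₂) (le_max_right 1 _)) hn)
        M (le_trans (le_max_left M₁ M₂) (le_max_right 1 _))
    have h3 := hM₂ M (le_trans (le_max_right M₁ M₂) (le_max_right 1 _))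
    rw [Real.dist_eq] at h2 h3 ⊢
    have h1' := abs_le.1 h1
    have h2' := abs_lt.1 h2
    have h3' := abs_lt.1 h3
    rw [abs_lt]
    constructor <;> linarith [h1'.1, h1'.2, h2'.1, h2'.2, h3'.1, h3'.2]
  obtain ⟨T, hT⟩ := cauchySeq_tendsto_of_complete hSicau
  refine ⟨T, hT, ?_⟩
  have hlim : ∀ N M, 1 ≤ M → |(t N - S N M) - (T - Si M)| ≤ c M := by
    intro N M hM
    have hten : Tendsto (fun M' => |(S N M' - S N M) - (Si M' - Si M)|) atTop
        (𝓝 |(t N - S N M) - (T - Si M)|) :=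
      (((hconv N).sub tendsto_const_nhds).sub (hT.sub tendsto_const_nhds)).abs
    refine le_of_tendsto hten ?_
    filter_upwards [eventually_ge_atTop M] with M' hM'
    exact hkey N M M' hM hM'
  rw [Metric.tendsto_atTop]
  intro ε hε
  obtain ⟨M₂, hM₂⟩ := Metric.tendsto_atTop.1 hc0 (ε / 2) (by linarith)
  set M := max 1 M₂ with hMdef
  have hM1 : 1 ≤ M := le_max_left _ _
  have hcM : |c M - 0| < ε / 2 := by
    have := hM₂ M (le_max_right _ _)
    rwa [Real.dist_eq] at this
  obtain ⟨N₀, hN₀⟩ := Metric.tendsto_atTop.1 (hfin M) (ε / 2) (by linarith)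
  refine ⟨N₀, fun N hN => ?_⟩
  have h1 := hlim N M hM1
  have h2 := hN₀ N hN
  rw [Real.dist_eq] at h2 ⊢
  have h1' := abs_le.1 h1
  have h2' := abs_lt.1 h2
  have h3' := abs_lt.1 hcM
  rw [abs_lt]
  constructor <;> linarith [h1'.1, h1'.2, h2'.1, h2'.2, h3'.1, h3'.2]

/-- Key analytic step in the proof of Lemma 4.5 (King–Terng): interlacing plus pointwise
convergence of the approximating eigenvalue sequences implies convergence of the
regularized traces. -/
theorem stmt_5 (lam mu : ℕ → ℝ) (lamN muN : ℕ → ℕ → ℝ) (t : ℕ → ℝ)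
    (hlam : Antitone lam) (hlam0 : ∀ i, 0 ≤ lam i) (hlamlim : Tendsto lam atTop (𝓝 0))
    (hmu : Monotone mu) (hmu0 : ∀ i, mu i ≤ 0) (hmulim : Tendsto mu atTop (𝓝 0))
    (hconv : ∀ N, Tendsto (fun M => ∑ i ∈ Finset.range M, (lamN N i + muN N i))
      atTop (𝓝 (t N)))
    (hintl : ∀ N, ∀ i, 1 ≤ i → lam (i + 1) ≤ lamN N i ∧ lamN N i ≤ lam (i - 1))
    (hintm : ∀ N, ∀ i, 1 ≤ i → mu (i - 1) ≤ muN N i ∧ muN N i ≤ mu (i + 1))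
    (hptl : ∀ i, Tendsto (fun N => lamN N i) atTop (𝓝 (lam i)))
    (hptm : ∀ i, Tendsto (fun N => muN N i) atTop (𝓝 (mu i))) :
    ∃ T : ℝ, Tendsto (fun M => ∑ i ∈ Finset.range M, (lam i + mu i)) atTop (𝓝 T) ∧
      Tendsto t atTop (𝓝 T) := by
  have hc0 : Tendsto (fun M : ℕ => lam (M - 1) - mu (M - 1)) atTop (𝓝 0) := by
    have h1 : Tendsto (fun M : ℕ => M - 1) atTop atTop := tendsto_sub_atTop_nat 1
    have := (hlamlim.comp h1).sub (hmulim.comp h1)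
    simpa [Function.comp] using this
  refine main (fun N M => ∑ i ∈ Finset.range M, (lamN N i + muN N i))
    (fun M => ∑ i ∈ Finset.range M, (lam i + mu i))
    (fun M => lam (M - 1) - mu (M - 1)) t hc0 ?_ hconv ?_
  · intro N M M' hM hMM
    have h1 := key lam mu hlam hlam0 hmu hmu0 (fun i => lamN N i + muN N i)
      (fun i hi => ⟨add_le_add (hintl N i hi).1 (hintm N i hi).1,
                    add_le_add (hintl N i hi).2 (hintm N i hi).2⟩) hM hMM
    rw [Finset.sum_Ico_eq_sub _ hMM, Finset.sum_Ico_eq_sub _ hMM] at h1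
    exact h1
  · intro M
    exact tendsto_finset_sum _ fun i _ => (hptl i).add (hptm i)
end

section
/- Let Γ ⊂ ℝⁿ be a lattice (the set of integer linear combinations of some ℝ-basis v_1,…,v_n of ℝⁿ) and Γ* := {ω ∈ ℝⁿ : ⟨ω, γ⟩ ∈ ℤ for all γ ∈ Γ} its dual lattice. Let α ∈ Γ* with α ≠ 0, let S ⊂ Γ* be a finite set, and let a : S → ℂ satisfy a_{−ω} = conj(a_ω) whenever ω, −ω ∈ S (with a_ω := 0 for ω ∉ S), so that f(x) := ∑_{ω∈S} a_ω·e^{2πi⟨ω,x⟩} is real-valued. Suppose g : ℝⁿ → ℝ is a C^∞ function such that g(x)·sin(π⟨α,x⟩) = f(x)·cos(π⟨α,x⟩) for all x ∈ ℝⁿ (i.e. g is a smooth extension of f·cot(π⟨α,·⟩)). Then there exist a finite set T ⊆ Γ* contained in the convex hull (in ℝⁿ) of {ω ∈ S : a_ω ≠ 0} and coefficients b : T → ℂ such that g(x) = ∑_{ω∈T} b_ω·e^{2πi⟨ω,x⟩} for all x ∈ ℝⁿ. -/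
open Filter Topology
open scoped RealInnerProductSpace

open Complex
open scoped RealInnerProductSpace
open scoped Classical
noncomputable section StmtAux
variable {n : ℕ}

def chr (ω x : EuclideanSpace ℝ (Fin n)) : ℂ :=
  Complex.exp (2 * Real.pi * Complex.I * (⟪ω, x⟫ : ℝ))

lemma chr_add_right (ω x y : EuclideanSpace ℝ (Fin n)) :
    chr ω (x + y) = chr ω x * chr ω y := by
  rw [chr, chr, chr, ← Complex.exp_add, inner_add_right]
  push_cast; ring_nf

lemma chr_zero_right (ω : EuclideanSpace ℝ (Fin n)) : chr ω 0 = 1 := by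
  simp [chr]

def hgt (α ω : EuclideanSpace ℝ (Fin n)) : ℝ := ⟪ω, α⟫ / ⟪α, α⟫

def prj (α ω : EuclideanSpace ℝ (Fin n)) : EuclideanSpace ℝ (Fin n) := ω - hgt α ω • α

def zcu (α ω : EuclideanSpace ℝ (Fin n)) : ℂˣ :=
  Units.mk0 (Complex.exp (2 * Real.pi * Complex.I * (hgt α ω : ℝ))) (Complex.exp_ne_zero _)

def chrHom (p : EuclideanSpace ℝ (Fin n)) : Multiplicative (EuclideanSpace ℝ (Fin n)) →* ℂ where
  toFun := fun x => chr p x.toAdd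
  map_one' := chr_zero_right p
  map_mul' := fun x y => chr_add_right p x.toAdd y.toAdd

def Phi (α ω : EuclideanSpace ℝ (Fin n)) :
    (Multiplicative (EuclideanSpace ℝ (Fin n)) × Multiplicative ℤ) →* ℂ :=
  ((chrHom (prj α ω)).comp (MonoidHom.fst _ _)) *
  ((Units.coeHom ℂ).comp ((zpowersHom ℂˣ (zcu α ω)).comp (MonoidHom.snd _ _)))

lemma Phi_apply (α ω x : EuclideanSpace ℝ (Fin n)) (k : ℤ) :
    Phi α ω (Multiplicative.ofAdd x, Multiplicative.ofAdd k)
      = chr (prj α ω) x * (Complex.exp (2 * Real.pi * Complex.I * (hgt α ω : ℝ))) ^ k := by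
  simp [Phi, chrHom, zcu, zpowersHom]

section More
variable {n : ℕ} {α : EuclideanSpace ℝ (Fin n)}

lemma chr_add_left (ω ω' x : EuclideanSpace ℝ (Fin n)) :
    chr (ω + ω') x = chr ω x * chr ω' x := by
  rw [chr, chr, chr, ← Complex.exp_add, inner_add_left]
  push_cast; ring_nf

lemma chr_ne_zero (ω x : EuclideanSpace ℝ (Fin n)) : chr ω x ≠ 0 :=
  Complex.exp_ne_zero _

lemma chr_inj {ω ω' : EuclideanSpace ℝ (Fin n)} (h : ∀ x, chr ω x = chr ω' x) : ω = ω' := by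
  by_contra hne
  have hd : ω - ω' ≠ 0 := sub_ne_zero.mpr hne
  set d := ω - ω' with hdd
  have h1 : ∀ x, chr d x = 1 := by
    intro x
    have := h x
    have h2 : chr d x * chr ω' x = chr ω' x := by
      rw [← chr_add_left]; simp [hdd, this]
    exact mul_right_cancel₀ (chr_ne_zero _ _) (by rw [h2, one_mul])
  have hx := h1 ((1 / (2 * ⟪d, d⟫)) • d)
  rw [chr, real_inner_smul_right] at hx
  have hdd0 : ⟪d, d⟫ ≠ 0 := inner_self_ne_zero.mpr hd
  have : (1 / (2 * ⟪d, d⟫)) * ⟪d, d⟫ = 1 / 2 := by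
    generalize hr : (⟪d, d⟫ : ℝ) = r at hdd0 ⊢
    field_simp
  rw [this] at hx
  have : (2 : ℂ) * Real.pi * Complex.I * ((1:ℝ)/2 : ℝ) = Real.pi * Complex.I := by
    push_cast; ring
  rw [this, Complex.exp_pi_mul_I] at hx
  norm_num at hx

lemma hgt_add_int (hα0 : α ≠ 0) (ω : EuclideanSpace ℝ (Fin n)) (t : ℤ) :
    hgt α (ω + (t : ℝ) • α) = hgt α ω + t := by
  have hne : ⟪α, α⟫ ≠ 0 := inner_self_ne_zero.mpr hα0
  rw [hgt, hgt, inner_add_left, real_inner_smul_left, add_div, mul_div_assoc,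
    div_self hne, mul_one]

lemma prj_add_int (hα0 : α ≠ 0) (ω : EuclideanSpace ℝ (Fin n)) (t : ℤ) :
    prj α (ω + (t : ℝ) • α) = prj α ω := by
  rw [prj, prj, hgt_add_int hα0, add_smul]
  abel

lemma prj_decomp (ω : EuclideanSpace ℝ (Fin n)) : ω = prj α ω + hgt α ω • α := by
  rw [prj]; abel

lemma Phi_eq_iff (hα0 : α ≠ 0) (ω ω' : EuclideanSpace ℝ (Fin n)) :
    Phi α ω = Phi α ω' ↔ ∃ t : ℤ, ω' = ω + (t : ℝ) • α := by
  constructor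
  · intro h
    have h1 : ∀ x, chr (prj α ω) x = chr (prj α ω') x := by
      intro x
      have := DFunLike.congr_fun h
        (Multiplicative.ofAdd x, Multiplicative.ofAdd (0 : ℤ))
      rw [Phi_apply, Phi_apply] at this
      simpa using this
    have hprj : prj α ω = prj α ω' := chr_inj h1
    have h2 : Complex.exp (2 * Real.pi * Complex.I * (hgt α ω : ℝ))
        = Complex.exp (2 * Real.pi * Complex.I * (hgt α ω' : ℝ)) := by
      have := DFunLike.congr_fun h
        (Multiplicative.ofAdd (0 : EuclideanSpace ℝ (Fin n)), Multiplicative.ofAdd (1 : ℤ))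
      rw [Phi_apply, Phi_apply] at this
      simpa [chr_zero_right] using this
    have h3 : Complex.exp (2 * Real.pi * Complex.I * (hgt α ω : ℝ)
        - 2 * Real.pi * Complex.I * (hgt α ω' : ℝ)) = 1 := by
      rw [Complex.exp_sub, h2, div_self (Complex.exp_ne_zero _)]
    rw [Complex.exp_eq_one_iff] at h3
    obtain ⟨m, hm⟩ := h3
    have hm' : ((hgt α ω - hgt α ω' : ℝ) : ℂ) = (m : ℂ) := by
      have h2pi : (2 * (Real.pi : ℂ) * Complex.I) ≠ 0 := by
        simp [Real.pi_ne_zero, Complex.I_ne_zero]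
      apply mul_left_cancel₀ h2pi
      rw [show ((2:ℂ) * Real.pi * Complex.I) * ((hgt α ω - hgt α ω' : ℝ) : ℂ)
          = 2 * Real.pi * Complex.I * (hgt α ω : ℝ) - 2 * Real.pi * Complex.I * (hgt α ω' : ℝ) by
        push_cast; ring, hm]
      ring
    have hreal : hgt α ω - hgt α ω' = (m : ℝ) := by exact_mod_cast hm'
    refine ⟨-m, ?_⟩
    have h4 : hgt α ω' = hgt α ω + ((-m : ℤ) : ℝ) := by push_cast; linarith
    calc ω' = prj α ω' + hgt α ω' • α := prj_decomp ω'
      _ = prj α ω + (hgt α ω + ((-m:ℤ):ℝ)) • α := by rw [← hprj, h4]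
      _ = (prj α ω + hgt α ω • α) + ((-m:ℤ):ℝ) • α := by rw [add_smul]; abel
      _ = ω + ((-m:ℤ):ℝ) • α := by rw [← prj_decomp]
  · rintro ⟨t, rfl⟩
    have hz : zcu α (ω + (t:ℝ) • α) = zcu α ω := by
      apply Units.ext
      show Complex.exp _ = Complex.exp _
      rw [hgt_add_int hα0]
      rw [show ((2:ℂ) * Real.pi * Complex.I * ((hgt α ω + t : ℝ) : ℂ))
          = 2 * Real.pi * Complex.I * (hgt α ω : ℝ) + (t : ℂ) * (2 * Real.pi * Complex.I) by
        push_cast; ring]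
      rw [Complex.exp_add, Complex.exp_int_mul_two_pi_mul_I, mul_one]
    rw [Phi, Phi, prj_add_int hα0, hz]

lemma chr_eval (hα0 : α ≠ 0) (ω y : EuclideanSpace ℝ (Fin n)) (k : ℤ) :
    chr ω (prj α y + (k : ℝ) • ((⟪α, α⟫)⁻¹ • α))
      = chr (prj α ω) y * (Complex.exp (2 * Real.pi * Complex.I * (hgt α ω : ℝ))) ^ k := by
  have hc : ⟪α, α⟫ ≠ 0 := inner_self_ne_zero.mpr hα0
  rw [chr, chr, ← Complex.exp_int_mul, ← Complex.exp_add]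
  congr 1
  rw [inner_add_right, real_inner_smul_right, real_inner_smul_right, prj, prj,
    inner_sub_right, real_inner_smul_right, inner_sub_left, real_inner_smul_left]
  have e1 : hgt α y * ⟪ω, α⟫ = hgt α ω * ⟪α, y⟫ := by
    rw [hgt, hgt, real_inner_comm α y]; ring
  have e2 : (⟪α, α⟫)⁻¹ * ⟪ω, α⟫ = hgt α ω := by
    rw [hgt, div_eq_inv_mul]
  have E1 : ((hgt α y * ⟪ω, α⟫ : ℝ) : ℂ) = ((hgt α ω * ⟪α, y⟫ : ℝ) : ℂ) := by
    exact_mod_cast congrArg (fun r : ℝ => (r : ℂ)) e1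
  have E2 : (((⟪α, α⟫)⁻¹ * ⟪ω, α⟫ : ℝ) : ℂ) = ((hgt α ω : ℝ) : ℂ) := by
    exact_mod_cast congrArg (fun r : ℝ => (r : ℂ)) e2
  push_cast at E1 E2 ⊢
  linear_combination (2 * (Real.pi : ℂ) * Complex.I) * (E2 * k - E1)

lemma inner_alpha_eval (hα0 : α ≠ 0) (y : EuclideanSpace ℝ (Fin n)) (k : ℤ) :
    ⟪α, prj α y + (k : ℝ) • ((⟪α, α⟫)⁻¹ • α)⟫ = (k : ℝ) := by
  have hc : ⟪α, α⟫ ≠ 0 := inner_self_ne_zero.mpr hα0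
  rw [inner_add_right, real_inner_smul_right, real_inner_smul_right, prj,
    inner_sub_right, real_inner_smul_right, hgt]
  rw [div_mul_cancel₀ _ hc, inv_mul_cancel₀ hc, real_inner_comm α y]
  ring

lemma coset_sum_zero (hα0 : α ≠ 0) (A : Finset (EuclideanSpace ℝ (Fin n)))
    (c : EuclideanSpace ℝ (Fin n) → ℂ)
    (hvanish : ∀ x, (∃ m : ℤ, ⟪α, x⟫ = (m : ℝ)) → ∑ ω ∈ A, c ω * chr ω x = 0)
    (ω₀ : EuclideanSpace ℝ (Fin n)) :
    ∑ ω ∈ A.filter (fun ω => Phi α ω = Phi α ω₀), c ω = 0 := by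
  classical
  have hLI := linearIndependent_iff'.mp
    (linearIndependent_monoidHom (Multiplicative (EuclideanSpace ℝ (Fin n)) × Multiplicative ℤ) ℂ)
  set s := A.image (Phi α) with hs
  set gco : ((Multiplicative (EuclideanSpace ℝ (Fin n)) × Multiplicative ℤ) →* ℂ) → ℂ :=
    fun φ => ∑ ω ∈ A.filter (fun ω => Phi α ω = φ), c ω with hgco
  have hsum : ∑ φ ∈ s, gco φ • (⇑φ : _ → ℂ) = 0 := by
    funext p
    rw [Finset.sum_apply, Pi.zero_apply]
    have hfib : ∑ φ ∈ s, (gco φ • (⇑φ : _ → ℂ)) p = ∑ ω ∈ A, c ω * Phi α ω p := by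
      rw [hs]
      refine Finset.sum_image' _ ?_
      intro ω hω
      rw [Pi.smul_apply, smul_eq_mul, hgco, Finset.sum_mul]
      refine Finset.sum_congr rfl ?_
      intro ω' hω'
      rw [(Finset.mem_filter.mp hω').2]
    rw [hfib]
    obtain ⟨xm, km⟩ := p
    have hpt : ∀ ω, Phi α ω (xm, km) = chr ω (prj α xm.toAdd
        + ((km.toAdd : ℤ) : ℝ) • ((⟪α, α⟫)⁻¹ • α)) := by
      intro ω
      rw [chr_eval hα0, ← Phi_apply]
      rfl
    calc ∑ ω ∈ A, c ω * Phi α ω (xm, km)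
        = ∑ ω ∈ A, c ω * chr ω (prj α xm.toAdd + ((km.toAdd : ℤ) : ℝ) • ((⟪α, α⟫)⁻¹ • α)) := by
          exact Finset.sum_congr rfl fun ω _ => by rw [hpt]
      _ = 0 := hvanish _ ⟨km.toAdd, inner_alpha_eval hα0 _ _⟩
  by_cases hmem : Phi α ω₀ ∈ s
  · exact hLI s gco hsum _ hmem
  · rw [Finset.filter_false_of_mem, Finset.sum_empty]
    intro ω hω hphi
    exact hmem (Finset.mem_image.mpr ⟨ω, hω, hphi⟩)
end More
end StmtAux

open Filter Topology


/-- Lemma 7.2 (cotangent case): if `f` is a finite real-valued Fourier sum supported on the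
dual lattice `Γ*` and `f·cot(π⟨α,·⟩)` extends to a smooth function `g` on `ℝⁿ`, then `g` is
a finite Fourier sum supported on `Γ*` inside the convex hull of the support of `f`. -/
theorem stmt_6 (n : ℕ) (v : Module.Basis (Fin n) ℝ (EuclideanSpace ℝ (Fin n)))
    (Γ : Set (EuclideanSpace ℝ (Fin n)))
    (hΓ : Γ = Set.range fun m : Fin n → ℤ => ∑ i, (m i : ℝ) • v i)
    (Γd : Set (EuclideanSpace ℝ (Fin n)))
    (hΓd : Γd = {ω : EuclideanSpace ℝ (Fin n) | ∀ γ ∈ Γ, ∃ m : ℤ, ⟪ω, γ⟫ = (m : ℝ)})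
    (α : EuclideanSpace ℝ (Fin n)) (hα : α ∈ Γd) (hα0 : α ≠ 0)
    (S : Finset (EuclideanSpace ℝ (Fin n))) (hS : (↑S : Set (EuclideanSpace ℝ (Fin n))) ⊆ Γd)
    (a : EuclideanSpace ℝ (Fin n) → ℂ) (ha0 : ∀ ω ∉ S, a ω = 0)
    (haconj : ∀ ω, a (-ω) = (starRingEnd ℂ) (a ω))
    (f : EuclideanSpace ℝ (Fin n) → ℂ)
    (hf : ∀ x, f x = ∑ ω ∈ S, a ω * Complex.exp (2 * Real.pi * Complex.I * (⟪ω, x⟫ : ℂ)))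
    (g : EuclideanSpace ℝ (Fin n) → ℝ) (hg : ContDiff ℝ (⊤ : ℕ∞) g)
    (heq : ∀ x, ((g x * Real.sin (Real.pi * ⟪α, x⟫) : ℝ) : ℂ)
      = f x * ((Real.cos (Real.pi * ⟪α, x⟫) : ℝ) : ℂ)) :
    ∃ T : Finset (EuclideanSpace ℝ (Fin n)),
      (↑T : Set (EuclideanSpace ℝ (Fin n))) ⊆ Γd ∧
      (↑T : Set (EuclideanSpace ℝ (Fin n))) ⊆
        convexHull ℝ {ω : EuclideanSpace ℝ (Fin n) | ω ∈ S ∧ a ω ≠ 0} ∧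
      ∃ b : EuclideanSpace ℝ (Fin n) → ℂ, ∀ x,
        (g x : ℂ) = ∑ ω ∈ T, b ω * Complex.exp (2 * Real.pi * Complex.I * (⟪ω, x⟫ : ℂ)) := by
  classical
  have hc : ⟪α, α⟫ ≠ 0 := inner_self_ne_zero.mpr hα0
  set A : Finset (EuclideanSpace ℝ (Fin n)) := S.filter (fun ω => a ω ≠ 0) with hA
  have hAS : A ⊆ S := Finset.filter_subset _ _
  have haA : ∀ ω ∉ A, a ω = 0 := by
    intro ω hω
    by_cases hωS : ω ∈ S
    · by_contra hne
      exact hω (Finset.mem_filter.mpr ⟨hωS, hne⟩)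
    · exact ha0 ω hωS
  have hfA : ∀ x, f x = ∑ ω ∈ A, a ω * chr ω x := by
    intro x
    rw [hf x]
    exact (Finset.sum_subset hAS (fun ω _ hω => by rw [haA ω hω, zero_mul])).symm
  -- f vanishes where ⟨α,x⟩ ∈ ℤ
  have hfZ : ∀ x, (∃ m : ℤ, ⟪α, x⟫ = (m : ℝ)) → f x = 0 := by
    rintro x ⟨m, hm⟩
    have hs : Real.sin (Real.pi * ⟪α, x⟫) = 0 := by
      rw [hm, mul_comm]; exact Real.sin_int_mul_pi m
    have hsc := Real.sin_sq_add_cos_sq (Real.pi * ⟪α, x⟫)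
    have hcos : Real.cos (Real.pi * ⟪α, x⟫) ≠ 0 := by
      intro h0; rw [hs, h0] at hsc; norm_num at hsc
    have h := heq x
    rw [hs, mul_zero] at h
    have : f x * ((Real.cos (Real.pi * ⟪α, x⟫) : ℝ) : ℂ) = 0 := by
      rw [← h]; norm_num
    rcases mul_eq_zero.mp this with h1 | h2
    · exact h1
    · exact absurd (Complex.ofReal_eq_zero.mp h2) hcos
  have hvanish : ∀ x, (∃ m : ℤ, ⟪α, x⟫ = (m : ℝ)) → ∑ ω ∈ A, a ω * chr ω x = 0 := by
    intro x hx; rw [← hfA]; exact hfZ x hx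
  have hker : ∀ ω₀, ∑ ω ∈ A.filter (fun ω => Phi α ω = Phi α ω₀), a ω = 0 :=
    coset_sum_zero hα0 A a hvanish
  -- the quotient coefficients
  set Sle : EuclideanSpace ℝ (Fin n) → ℂ := fun ω =>
    ∑ ω' ∈ A.filter (fun ω' => Phi α ω' = Phi α ω ∧ hgt α ω' ≤ hgt α ω), a ω' with hSle
  set Slt : EuclideanSpace ℝ (Fin n) → ℂ := fun ω =>
    ∑ ω' ∈ A.filter (fun ω' => Phi α ω' = Phi α ω ∧ hgt α ω' < hgt α ω), a ω' with hSlt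
  set b : EuclideanSpace ℝ (Fin n) → ℂ := fun ω => -(Complex.I * (Sle ω + Slt ω)) with hb
  set T : Finset (EuclideanSpace ℝ (Fin n)) :=
    ((A ×ˢ A).filter (fun p => Phi α p.1 = Phi α p.2)).biUnion
      (fun p => (Finset.Icc (0 : ℤ) (round (hgt α p.2 - hgt α p.1))).image
        (fun t : ℤ => p.1 + (t : ℝ) • α)) with hT
  have hstep : ∀ ρ ρ', Phi α ρ = Phi α ρ' →
      ∃ t : ℤ, (t : ℝ) = hgt α ρ' - hgt α ρ ∧ ρ' = ρ + (t : ℝ) • α := by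
    intro ρ ρ' h
    obtain ⟨t, rfl⟩ := (Phi_eq_iff hα0 _ _).mp h
    exact ⟨t, by rw [hgt_add_int hα0]; ring, rfl⟩
  -- support of b is inside T
  have hbT : ∀ ω, b ω ≠ 0 → ω ∈ T := by
    intro ω hbω
    by_cases hup : ∃ ρ' ∈ A, Phi α ρ' = Phi α ω ∧ hgt α ω ≤ hgt α ρ'
    · have hne : (A.filter (fun ω' => Phi α ω' = Phi α ω ∧ hgt α ω' ≤ hgt α ω)).Nonempty := by
        rw [Finset.nonempty_iff_ne_empty]
        intro hemp
        apply hbω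
        have hemp' : A.filter (fun ω' => Phi α ω' = Phi α ω ∧ hgt α ω' < hgt α ω) = ∅ := by
          rw [Finset.eq_empty_iff_forall_notMem] at hemp ⊢
          intro ω' hω'
          obtain ⟨h1, h2, h3⟩ := Finset.mem_filter.mp hω'
          exact hemp ω' (Finset.mem_filter.mpr ⟨h1, h2, le_of_lt h3⟩)
        rw [hb]
        simp only [hSle, hSlt, hemp, hemp', Finset.sum_empty, add_zero, mul_zero, neg_zero]
      obtain ⟨ρ, hρ⟩ := hne
      obtain ⟨hρA, hphi, hle⟩ := Finset.mem_filter.mp hρ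
      obtain ⟨ρ', hρ'A, hphi', hle'⟩ := hup
      obtain ⟨t, ht, hωeq⟩ := hstep ρ ω hphi
      obtain ⟨k, hk, hρ'eq⟩ := hstep ρ ρ' (hphi.trans hphi'.symm)
      rw [hT]
      refine Finset.mem_biUnion.mpr ⟨(ρ, ρ'), ?_, ?_⟩
      · exact Finset.mem_filter.mpr ⟨Finset.mem_product.mpr ⟨hρA, hρ'A⟩, hphi.trans hphi'.symm⟩
      · have hk' : round (hgt α ρ' - hgt α ρ) = k := by rw [← hk]; exact round_intCast k
        have c1 : (0 : ℤ) ≤ t := by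
          have : (0 : ℝ) ≤ (t : ℝ) := by rw [ht]; linarith
          exact_mod_cast this
        have c2 : t ≤ round (hgt α ρ' - hgt α ρ) := by
          rw [hk']
          have : (t : ℝ) ≤ (k : ℝ) := by rw [ht, hk]; linarith
          exact_mod_cast this
        show ω ∈ (Finset.Icc (0:ℤ) (round (hgt α ρ' - hgt α ρ))).image (fun t : ℤ => ρ + (t:ℝ) • α)
        exact Finset.mem_image.mpr ⟨t, Finset.mem_Icc.mpr ⟨c1, c2⟩, hωeq.symm⟩
    · exfalso
      apply hbω
      push_neg at hup
      have h1 : A.filter (fun ω' => Phi α ω' = Phi α ω ∧ hgt α ω' ≤ hgt α ω)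
          = A.filter (fun ω' => Phi α ω' = Phi α ω) := by
        apply Finset.filter_congr
        intro ω' hω'
        exact and_iff_left_of_imp (fun hphi' => le_of_lt (hup ω' hω' hphi'))
      have h2 : A.filter (fun ω' => Phi α ω' = Phi α ω ∧ hgt α ω' < hgt α ω)
          = A.filter (fun ω' => Phi α ω' = Phi α ω) := by
        apply Finset.filter_congr
        intro ω' hω'
        exact and_iff_left_of_imp (fun hphi' => hup ω' hω' hphi')
      rw [hb]
      simp only [hSle, hSlt, h1, h2, hker ω, add_zero, mul_zero, neg_zero]
  -- the coefficient identity
  have hkey : ∀ σ, b (σ - α) - b σ = Complex.I * (a (σ - α) + a σ) := by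
    intro σ
    have hphi : Phi α (σ - α) = Phi α σ :=
      (Phi_eq_iff hα0 _ _).mpr ⟨1, by push_cast; rw [one_smul]; abel⟩
    have hht : hgt α σ = hgt α (σ - α) + 1 := by
      have h' := hgt_add_int hα0 (σ - α) 1
      rw [show σ - α + ((1:ℤ):ℝ) • α = σ by push_cast; rw [one_smul]; abel] at h'
      rw [h']; push_cast; ring
    have hdisj1 : Disjoint
        (A.filter (fun ω' => Phi α ω' = Phi α (σ-α) ∧ hgt α ω' ≤ hgt α (σ-α)))
        (A.filter (fun ω' => ω' = σ)) := by
      rw [Finset.disjoint_left]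
      intro ω' h1 h2
      obtain ⟨_, _, hle⟩ := Finset.mem_filter.mp h1
      obtain ⟨_, rfl⟩ := Finset.mem_filter.mp h2
      linarith
    have hdisj2 : Disjoint
        (A.filter (fun ω' => Phi α ω' = Phi α (σ-α) ∧ hgt α ω' < hgt α (σ-α)))
        (A.filter (fun ω' => ω' = σ - α)) := by
      rw [Finset.disjoint_left]
      intro ω' h1 h2
      obtain ⟨_, _, hle⟩ := Finset.mem_filter.mp h1
      obtain ⟨_, rfl⟩ := Finset.mem_filter.mp h2
      linarith
    have hsetle : A.filter (fun ω' => Phi α ω' = Phi α σ ∧ hgt α ω' ≤ hgt α σ)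
        = (A.filter (fun ω' => Phi α ω' = Phi α (σ-α) ∧ hgt α ω' ≤ hgt α (σ-α)))
          ∪ A.filter (fun ω' => ω' = σ) := by
      ext ω'
      simp only [Finset.mem_union, Finset.mem_filter]
      constructor
      · rintro ⟨hωA, hphi', hle⟩
        by_cases hcase : hgt α ω' ≤ hgt α (σ - α)
        · exact Or.inl ⟨hωA, hphi'.trans hphi.symm, hcase⟩
        · push_neg at hcase
          refine Or.inr ⟨hωA, ?_⟩
          obtain ⟨t, ht, hteq⟩ := hstep σ ω' hphi'.symm
          have ht0 : t = 0 := by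
            have h1 : (t:ℝ) ≤ 0 := by rw [ht]; linarith
            have h2 : (-1 : ℝ) < (t:ℝ) := by rw [ht]; linarith
            have h1' : t ≤ 0 := by exact_mod_cast h1
            have h2' : (-1 : ℤ) < t := by exact_mod_cast h2
            omega
          rw [hteq, ht0]
          simp
      · rintro (⟨hωA, hphi', hle⟩ | ⟨hωA, rfl⟩)
        · exact ⟨hωA, hphi'.trans hphi, by linarith⟩
        · exact ⟨hωA, rfl, le_refl _⟩
    have hsetlt : A.filter (fun ω' => Phi α ω' = Phi α σ ∧ hgt α ω' < hgt α σ)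
        = (A.filter (fun ω' => Phi α ω' = Phi α (σ-α) ∧ hgt α ω' < hgt α (σ-α)))
          ∪ A.filter (fun ω' => ω' = σ - α) := by
      ext ω'
      simp only [Finset.mem_union, Finset.mem_filter]
      constructor
      · rintro ⟨hωA, hphi', hlt⟩
        by_cases hcase : hgt α ω' < hgt α (σ - α)
        · exact Or.inl ⟨hωA, hphi'.trans hphi.symm, hcase⟩
        · push_neg at hcase
          refine Or.inr ⟨hωA, ?_⟩
          obtain ⟨t, ht, hteq⟩ := hstep σ ω' hphi'.symm
          have ht0 : t = -1 := by
            have h1 : (t:ℝ) < 0 := by rw [ht]; linarith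
            have h2 : (-1 : ℝ) ≤ (t:ℝ) := by rw [ht]; linarith
            have h1' : t < 0 := by exact_mod_cast h1
            have h2' : (-1 : ℤ) ≤ t := by exact_mod_cast h2
            omega
          rw [hteq, ht0]
          push_cast
          rw [neg_smul, one_smul]
          abel
      · rintro (⟨hωA, hphi', hlt⟩ | ⟨hωA, rfl⟩)
        · exact ⟨hωA, hphi'.trans hphi, by linarith⟩
        · exact ⟨hωA, hphi, by linarith⟩
    have c1 : Sle σ = Sle (σ - α) + a σ := by
      rw [hSle]
      simp only
      rw [hsetle, Finset.sum_union hdisj1]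
      congr 1
      rw [Finset.sum_filter, Finset.sum_ite_eq' A σ a]
      by_cases hσA : σ ∈ A
      · rw [if_pos hσA]
      · rw [if_neg hσA, haA σ hσA]
    have c2 : Slt σ = Slt (σ - α) + a (σ - α) := by
      rw [hSlt]
      simp only
      rw [hsetlt, Finset.sum_union hdisj2]
      congr 1
      rw [Finset.sum_filter, Finset.sum_ite_eq' A (σ - α) a]
      by_cases hσA : σ - α ∈ A
      · rw [if_pos hσA]
      · rw [if_neg hσA, haA _ hσA]
    rw [hb]
    simp only
    rw [c1, c2]
    ring
  set G : EuclideanSpace ℝ (Fin n) → ℂ := fun x => ∑ σ ∈ T, b σ * chr σ x with hG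
  -- the functional identity for G
  set U : Finset (EuclideanSpace ℝ (Fin n)) :=
    (T ∪ T.image (· + α)) ∪ (S ∪ S.image (· + α)) with hU
  have hTU : T ⊆ U := by intro σ hσ; rw [hU]; simp only [Finset.mem_union]; tauto
  have hSU : S ⊆ U := by intro σ hσ; rw [hU]; simp only [Finset.mem_union]; tauto
  have hTiU : T.image (· + α) ⊆ U := by
    intro σ hσ; rw [hU]; simp only [Finset.mem_union]; tauto
  have hSiU : S.image (· + α) ⊆ U := by
    intro σ hσ; rw [hU]; simp only [Finset.mem_union]; tauto
  have hbzT : ∀ σ, σ ∉ T → b σ = 0 := fun σ h => by by_contra hne; exact h (hbT σ hne)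
  have hbz' : ∀ σ, σ ∉ T.image (· + α) → b (σ - α) = 0 := by
    intro σ h
    by_contra hne
    exact h (Finset.mem_image.mpr ⟨σ - α, hbT _ hne, sub_add_cancel σ α⟩)
  have haz : ∀ σ, σ ∉ S → a σ = 0 := ha0
  have haz' : ∀ σ, σ ∉ S.image (· + α) → a (σ - α) = 0 := by
    intro σ h
    by_cases hσ : σ - α ∈ S
    · exact absurd (Finset.mem_image.mpr ⟨σ - α, hσ, sub_add_cancel σ α⟩) h
    · exact ha0 _ hσ
  have himg : ∀ (W : Finset (EuclideanSpace ℝ (Fin n))) (cc : EuclideanSpace ℝ (Fin n) → ℂ) x,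
      ∑ σ ∈ W, cc σ * chr (σ + α) x = ∑ σ ∈ W.image (· + α), cc (σ - α) * chr σ x := by
    intro W cc x
    rw [Finset.sum_image (fun y _ z _ h => by exact add_right_cancel h)]
    exact Finset.sum_congr rfl fun ω _ => by rw [add_sub_cancel_right]
  have hGfun : ∀ x, (chr α x - 1) * G x = Complex.I * f x * (chr α x + 1) := by
    intro x
    have hL : (chr α x - 1) * G x
        = ∑ σ ∈ U, (b (σ - α) - b σ) * chr σ x := by
      rw [hG]
      simp only
      rw [sub_mul, one_mul]
      have hL1 : chr α x * ∑ σ ∈ T, b σ * chr σ x = ∑ σ ∈ U, b (σ - α) * chr σ x := by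
        rw [Finset.mul_sum]
        calc ∑ σ ∈ T, chr α x * (b σ * chr σ x)
            = ∑ σ ∈ T, b σ * chr (σ + α) x := by
              refine Finset.sum_congr rfl fun σ _ => ?_
              rw [chr_add_left]; ring
          _ = ∑ σ ∈ T.image (· + α), b (σ - α) * chr σ x := himg T b x
          _ = ∑ σ ∈ U, b (σ - α) * chr σ x := by
              refine Finset.sum_subset hTiU fun σ _ hσ => ?_
              rw [hbz' σ hσ, zero_mul]
      have hL2 : ∑ σ ∈ T, b σ * chr σ x = ∑ σ ∈ U, b σ * chr σ x :=
        Finset.sum_subset hTU fun σ _ hσ => by rw [hbzT σ hσ, zero_mul]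
      rw [hL1, hL2, ← Finset.sum_sub_distrib]
      exact Finset.sum_congr rfl fun σ _ => by ring
    have hR : Complex.I * f x * (chr α x + 1)
        = ∑ σ ∈ U, (Complex.I * (a (σ - α) + a σ)) * chr σ x := by
      rw [hf x]
      have hR1 : (∑ ω ∈ S, a ω * chr ω x) * chr α x = ∑ σ ∈ U, a (σ - α) * chr σ x := by
        rw [Finset.sum_mul]
        calc ∑ σ ∈ S, a σ * chr σ x * chr α x
            = ∑ σ ∈ S, a σ * chr (σ + α) x := by
              refine Finset.sum_congr rfl fun σ _ => ?_
              rw [chr_add_left]; ring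
          _ = ∑ σ ∈ S.image (· + α), a (σ - α) * chr σ x := himg S a x
          _ = ∑ σ ∈ U, a (σ - α) * chr σ x := by
              refine Finset.sum_subset hSiU fun σ _ hσ => ?_
              rw [haz' σ hσ, zero_mul]
      have hR2 : ∑ ω ∈ S, a ω * chr ω x = ∑ σ ∈ U, a σ * chr σ x :=
        Finset.sum_subset hSU fun σ _ hσ => by rw [haz σ hσ, zero_mul]
      calc Complex.I * (∑ ω ∈ S, a ω * chr ω x) * (chr α x + 1)
          = Complex.I * ((∑ ω ∈ S, a ω * chr ω x) * chr α x)
            + Complex.I * (∑ ω ∈ S, a ω * chr ω x) := by ring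
        _ = Complex.I * (∑ σ ∈ U, a (σ - α) * chr σ x)
            + Complex.I * (∑ σ ∈ U, a σ * chr σ x) := by rw [hR1, hR2]
        _ = ∑ σ ∈ U, (Complex.I * (a (σ - α) + a σ)) * chr σ x := by
            rw [Finset.mul_sum, Finset.mul_sum, ← Finset.sum_add_distrib]
            exact Finset.sum_congr rfl fun σ _ => by ring
    rw [hL, hR]
    exact Finset.sum_congr rfl fun σ _ => by rw [hkey σ]
  -- the functional identity for g, from heq
  have hgid : ∀ x, (chr α x - 1) * (g x : ℂ) = Complex.I * f x * (chr α x + 1) := by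
    intro x
    have h := heq x
    set θ : ℝ := Real.pi * ⟪α, x⟫ with hθ
    set w : ℂ := Complex.exp ((θ : ℂ) * Complex.I) with hw
    have hw0 : w ≠ 0 := Complex.exp_ne_zero _
    have hw2 : chr α x = w ^ 2 := by
      rw [chr, hw, ← Complex.exp_nat_mul]
      congr 1
      rw [hθ]; push_cast; ring
    have hsin2 : (2 * w * Complex.I) * ((Real.sin θ : ℝ) : ℂ) = w ^ 2 - 1 := by
      rw [Complex.ofReal_sin, Complex.sin, neg_mul, Complex.exp_neg, ← hw]
      have hww : w * w⁻¹ = 1 := mul_inv_cancel₀ hw0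
      linear_combination (w * w⁻¹ - w ^ 2) * Complex.I_sq - hww
    have hcos2 : (2 * w) * ((Real.cos θ : ℝ) : ℂ) = w ^ 2 + 1 := by
      rw [Complex.ofReal_cos, Complex.cos, neg_mul, Complex.exp_neg, ← hw]
      field_simp
    have h2 : ((g x : ℝ) : ℂ) * ((Real.sin θ : ℝ) : ℂ) = f x * ((Real.cos θ : ℝ) : ℂ) := by
      rw [Complex.ofReal_mul] at h
      exact h
    rw [hw2]
    linear_combination (2 * w * Complex.I) * h2 - (g x : ℂ) * hsin2 + Complex.I * (f x) * hcos2
  -- g = G everywhere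
  have hGcont : Continuous G := by
    rw [hG]
    apply continuous_finset_sum
    intro σ _
    apply Continuous.mul continuous_const
    show Continuous fun x => chr σ x
    apply Complex.continuous_exp.comp
    apply Continuous.mul continuous_const
    exact Complex.continuous_ofReal.comp (Continuous.inner continuous_const continuous_id)
  have hkey2 : ∀ y, chr α y ≠ 1 → (g y : ℂ) = G y := by
    intro y hy
    exact mul_left_cancel₀ (sub_ne_zero.mpr hy) ((hgid y).trans (hGfun y).symm)
  have hfinal : ∀ x, (g x : ℂ) = G x := by
    intro x
    by_cases hx : chr α x = 1
    · set c : ℕ → ℝ := fun m => 1 / ((m : ℝ) + 2) * (⟪α, α⟫)⁻¹ with hcdef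
      set y : ℕ → EuclideanSpace ℝ (Fin n) := fun m => x + (c m) • α with hy
      have hyne : ∀ m, chr α (y m) ≠ 1 := by
        intro m
        rw [hy]
        simp only
        rw [chr_add_right, hx, one_mul, chr, real_inner_smul_right]
        rw [show c m * ⟪α, α⟫ = 1 / ((m : ℝ) + 2) by
          rw [hcdef]; simp only; rw [mul_assoc, inv_mul_cancel₀ hc, mul_one]]
        intro h1
        rw [Complex.exp_eq_one_iff] at h1
        obtain ⟨k, hk⟩ := h1
        have hcast : ((1 / ((m : ℝ) + 2) : ℝ) : ℂ) = (k : ℂ) := by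
          have h2pi : (2 * (Real.pi : ℂ) * Complex.I) ≠ 0 := by
            simp [Real.pi_ne_zero, Complex.I_ne_zero]
          apply mul_left_cancel₀ h2pi
          rw [hk]; ring
        have hre : 1 / ((m : ℝ) + 2) = (k : ℝ) := by exact_mod_cast hcast
        have hpos : (0:ℝ) < 1 / ((m : ℝ) + 2) := by positivity
        have hlt : 1 / ((m : ℝ) + 2) < 1 := by
          rw [div_lt_one (by positivity)]
          have : (0:ℝ) ≤ (m:ℝ) := Nat.cast_nonneg m
          linarith
        rw [hre] at hpos hlt
        have hk1 : (0:ℤ) < k := by exact_mod_cast hpos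
        have hk2 : k < 1 := by exact_mod_cast hlt
        omega
      have hcy : Filter.Tendsto y Filter.atTop (nhds x) := by
        rw [hy]
        have h1 : Filter.Tendsto (fun m : ℕ => ((m : ℝ) + 2)) Filter.atTop Filter.atTop :=
          Filter.tendsto_atTop_add_const_right _ 2 tendsto_natCast_atTop_atTop
        have h0 : Filter.Tendsto c Filter.atTop (nhds 0) := by
          rw [hcdef]
          have h2 : Filter.Tendsto (fun m : ℕ => 1 / ((m : ℝ) + 2)) Filter.atTop (nhds 0) := by
            simpa [one_div, Pi.inv_def] using h1.inv_tendsto_atTop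
          simpa using h2.mul_const (⟪α, α⟫)⁻¹
        have h3 : Filter.Tendsto (fun m => (c m) • α) Filter.atTop (nhds ((0:ℝ) • α)) :=
          h0.smul_const α
        have h4 := (tendsto_const_nhds :
          Filter.Tendsto (fun _ : ℕ => x) Filter.atTop (nhds x)).add h3
        simpa using h4
      have t1 : Filter.Tendsto (fun m => (g (y m) : ℂ)) Filter.atTop (nhds (g x)) :=
        ((Complex.continuous_ofReal.comp hg.continuous).tendsto x).comp hcy
      have t2 : Filter.Tendsto (fun m => G (y m)) Filter.atTop (nhds (G x)) :=
        (hGcont.tendsto x).comp hcy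
      exact tendsto_nhds_unique (t1.congr (fun m => hkey2 _ (hyne m))) t2
    · exact hkey2 x hx
  have hTmem : ∀ σ ∈ T, ∃ ρ ρ' : EuclideanSpace ℝ (Fin n), ρ ∈ A ∧ ρ' ∈ A ∧
      Phi α ρ = Phi α ρ' ∧ ∃ t : ℤ, 0 ≤ t ∧ t ≤ round (hgt α ρ' - hgt α ρ)
        ∧ σ = ρ + (t : ℝ) • α := by
    intro σ hσ
    rw [hT] at hσ
    obtain ⟨p, hp, hσ'⟩ := Finset.mem_biUnion.mp hσ
    obtain ⟨hpA, hpPhi⟩ := Finset.mem_filter.mp hp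
    obtain ⟨hp1, hp2⟩ := Finset.mem_product.mp hpA
    obtain ⟨t, htIcc, hteq⟩ := Finset.mem_image.mp hσ'
    obtain ⟨ht0, htk⟩ := Finset.mem_Icc.mp htIcc
    exact ⟨p.1, p.2, hp1, hp2, hpPhi, t, ht0, htk, hteq.symm⟩
  refine ⟨T, ?_, ?_, b, ?_⟩
  · -- T ⊆ Γd
    intro σ hσ
    obtain ⟨ρ, ρ', hρA, _, _, t, _, _, rfl⟩ := hTmem σ hσ
    have hρd : ρ ∈ Γd := hS (hAS hρA)
    rw [hΓd] at hρd hα ⊢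
    intro γ hγ
    obtain ⟨m1, hm1⟩ := hρd γ hγ
    obtain ⟨m2, hm2⟩ := hα γ hγ
    refine ⟨m1 + t * m2, ?_⟩
    rw [inner_add_left, real_inner_smul_left, hm1, hm2]
    push_cast
    ring
  · -- T ⊆ convex hull
    intro σ hσ
    obtain ⟨ρ, ρ', hρA, hρ'A, hphi, t, ht0, htk, rfl⟩ := hTmem σ hσ
    obtain ⟨k, hk, hρ'eq⟩ := hstep ρ ρ' hphi
    have hkr : round (hgt α ρ' - hgt α ρ) = k := by rw [← hk]; exact round_intCast k
    rw [hkr] at htk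
    have hmemρ : ρ ∈ {ω : EuclideanSpace ℝ (Fin n) | ω ∈ S ∧ a ω ≠ 0} := by
      rw [hA] at hρA
      obtain ⟨h1, h2⟩ := Finset.mem_filter.mp hρA
      exact ⟨h1, h2⟩
    have hmemρ' : ρ' ∈ {ω : EuclideanSpace ℝ (Fin n) | ω ∈ S ∧ a ω ≠ 0} := by
      rw [hA] at hρ'A
      obtain ⟨h1, h2⟩ := Finset.mem_filter.mp hρ'A
      exact ⟨h1, h2⟩
    by_cases hk0 : k = 0
    · have ht00 : t = 0 := by omega
      have : ρ + ((t:ℤ) : ℝ) • α = ρ := by rw [ht00]; push_cast; rw [zero_smul, add_zero]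
      rw [this]
      exact subset_convexHull ℝ _ hmemρ
    · have hkpos : (0:ℤ) < k := by omega
      have hkR : (0:ℝ) < (k:ℝ) := by exact_mod_cast hkpos
      set μ : ℝ := (t : ℝ) / (k : ℝ) with hμ
      have hμ0 : 0 ≤ μ := by
        apply div_nonneg _ (le_of_lt hkR)
        exact_mod_cast ht0
      have hμ1 : μ ≤ 1 := by
        rw [hμ, div_le_one hkR]
        exact_mod_cast htk
      have hconv : ρ + ((t:ℤ) : ℝ) • α = (1 - μ) • ρ + μ • ρ' := by
        rw [hρ'eq, smul_add, ← add_assoc, ← add_smul, sub_add_cancel, one_smul, smul_smul]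
        congr 1
        rw [hμ, div_mul_cancel₀]
        exact ne_of_gt hkR
      rw [hconv]
      apply segment_subset_convexHull hmemρ hmemρ'
      exact ⟨1 - μ, μ, by linarith, hμ0, by ring, rfl⟩
  · intro x
    rw [hfinal x]
    rfl
end

section
/- Let Γ ⊂ ℝⁿ be a lattice (the set of integer linear combinations of some ℝ-basis v_1,…,v_n of ℝⁿ) and Γ* := {ω ∈ ℝⁿ : ⟨ω, γ⟩ ∈ ℤ for all γ ∈ Γ} its dual lattice. Let α ∈ Γ* with α ≠ 0, let S ⊂ Γ* be a finite set, and let a : S → ℂ satisfy a_{−ω} = conj(a_ω) whenever ω, −ω ∈ S (with a_ω := 0 for ω ∉ S), so that f(x) := ∑_{ω∈S} a_ω·e^{2πi⟨ω,x⟩} is real-valued. Suppose g : ℝⁿ → ℝ is a C^∞ function such that g(x)·cos(π⟨α,x⟩) = f(x)·sin(π⟨α,x⟩) for all x ∈ ℝⁿ (i.e. g is a smooth extension of f·tan(π⟨α,·⟩)). Then there exist a finite set T ⊆ Γ* contained in the convex hull (in ℝⁿ) of {ω ∈ S : a_ω ≠ 0} and coefficients b : T → ℂ such that g(x) = ∑_{ω∈T}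 b_ω·e^{2πi⟨ω,x⟩} for all x ∈ ℝⁿ. -/
open Filter Topology
open scoped RealInnerProductSpace
open Polynomial

noncomputable section
namespace Stmt7Aux

variable {n : ℕ}

def e (ω x : EuclideanSpace ℝ (Fin n)) : ℂ :=
  Complex.exp (2 * Real.pi * Complex.I * (⟪ω, x⟫ : ℂ))

lemma e_ne_zero (ω x : EuclideanSpace ℝ (Fin n)) : e ω x ≠ 0 := Complex.exp_ne_zero _

lemma e_add (ω ω' x : EuclideanSpace ℝ (Fin n)) : e (ω + ω') x = e ω x * e ω' x := by
  rw [e, e, e, ← Complex.exp_add]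
  congr 1
  rw [inner_add_left]
  push_cast
  ring

lemma e_nsmul (k : ℕ) (α x : EuclideanSpace ℝ (Fin n)) :
    e ((k : ℝ) • α) x = e α x ^ k := by
  rw [e, e, ← Complex.exp_nat_mul]
  congr 1
  rw [real_inner_smul_left]
  push_cast
  ring

lemma inner_self_pos' {x : EuclideanSpace ℝ (Fin n)} (hx : x ≠ 0) : 0 < ⟪x, x⟫ := by
  rw [real_inner_self_eq_norm_sq]
  exact pow_pos (norm_pos_iff.mpr hx) 2

def mkchar (u : ℝ) (w : EuclideanSpace ℝ (Fin n)) :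
    Multiplicative (ℤ × EuclideanSpace ℝ (Fin n)) →* ℂ where
  toFun p := Complex.exp (2 * Real.pi * Complex.I *
      ((((Multiplicative.toAdd p).1 : ℝ) * u + ⟪w, (Multiplicative.toAdd p).2⟫ : ℝ) : ℂ))
  map_one' := by simp
  map_mul' p q := by
    show Complex.exp _ = _
    rw [← Complex.exp_add]
    congr 1
    have h1 : (Multiplicative.toAdd (p * q)).1 = (Multiplicative.toAdd p).1 + (Multiplicative.toAdd q).1 := rfl
    have h2 : (Multiplicative.toAdd (p * q)).2 = (Multiplicative.toAdd p).2 + (Multiplicative.toAdd q).2 := rfl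
    rw [h1, h2, inner_add_right]
    push_cast
    ring

lemma mkchar_apply (u : ℝ) (w : EuclideanSpace ℝ (Fin n)) (k : ℤ) (y : EuclideanSpace ℝ (Fin n)) :
    mkchar u w (Multiplicative.ofAdd (k, y)) =
      Complex.exp (2 * Real.pi * Complex.I * (((k : ℝ) * u + ⟪w, y⟫ : ℝ) : ℂ)) := rfl

lemma exp_two_pi_eq_one {r : ℝ} (h : Complex.exp (2 * Real.pi * Complex.I * (r : ℂ)) = 1) :
    ∃ m : ℤ, r = m := by
  rw [Complex.exp_eq_one_iff] at h
  obtain ⟨m, hm⟩ := h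
  refine ⟨m, ?_⟩
  have hne : (2 * Real.pi * Complex.I : ℂ) ≠ 0 :=
    mul_ne_zero (mul_ne_zero two_ne_zero (Complex.ofReal_ne_zero.2 Real.pi_ne_zero))
      Complex.I_ne_zero
  have : (r : ℂ) = (m : ℂ) := by
    have := mul_left_cancel₀ hne (hm.trans (by ring))
    exact_mod_cast this
  exact_mod_cast this

lemma claim2 {ι : Type} [Fintype ι] (α : EuclideanSpace ℝ (Fin n)) (hα0 : α ≠ 0)
    (ρ : ι → EuclideanSpace ℝ (Fin n)) (c : ι → ℂ)
    (hsep : ∀ q q' : ι, (∃ j : ℤ, ρ q - ρ q' = (j : ℝ) • α) → q = q')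
    (hvan : ∀ x, Real.cos (Real.pi * ⟪α, x⟫) = 0 → ∑ q, c q * e (ρ q) x = 0) :
    ∀ q, c q = 0 := by
  classical
  set A : ℝ := ⟪α, α⟫ with hA
  have hA0 : 0 < A := inner_self_pos' hα0
  set u : ι → ℝ := fun q => ⟪ρ q, α⟫ / A with hu
  set w : ι → EuclideanSpace ℝ (Fin n) := fun q => ρ q - u q • α with hw
  set Φ : ι → (Multiplicative (ℤ × EuclideanSpace ℝ (Fin n)) →* ℂ) :=
    fun q => mkchar (u q) (w q) with hΦ
  -- injectivity
  have hΦinj : Function.Injective Φ := by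
    intro q q' hqq'
    apply hsep
    have hwq : w q = w q' := by
      by_contra hne
      set δ := w q - w q' with hδ
      have hδ0 : δ ≠ 0 := sub_ne_zero.2 hne
      have hδp : (0:ℝ) < ⟪δ, δ⟫ := inner_self_pos' hδ0
      set y : EuclideanSpace ℝ (Fin n) := (1 / (2 * ⟪δ, δ⟫)) • δ with hy
      have h1 := congrArg (fun φ => φ (Multiplicative.ofAdd ((0 : ℤ), y))) hqq'
      simp only [hΦ, mkchar_apply] at h1
      have h2 : Complex.exp (2 * Real.pi * Complex.I * ((⟪w q, y⟫ - ⟪w q', y⟫ : ℝ) : ℂ)) = 1 := by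
        rw [Complex.ofReal_sub, mul_sub, Complex.exp_sub]
        rw [div_eq_one_iff_eq (Complex.exp_ne_zero _)]
        simpa using h1
      have h3 : ⟪w q, y⟫ - ⟪w q', y⟫ = 1 / 2 := by
        rw [← inner_sub_left]
        show ⟪δ, y⟫ = 1/2
        rw [hy, real_inner_smul_right]
        have hd : ⟪δ, δ⟫ ≠ 0 := ne_of_gt hδp
        generalize hgen : ⟪δ, δ⟫ = d at hd ⊢
        field_simp
      rw [h3] at h2
      obtain ⟨m, hm⟩ := exp_two_pi_eq_one h2
      have h5 : (2 : ℝ) * m = 1 := by rw [← hm]; norm_num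
      have : (2 * m : ℤ) = (1 : ℤ) := by exact_mod_cast h5
      omega
    have h1 := congrArg (fun φ => φ (Multiplicative.ofAdd ((1 : ℤ), (0 : EuclideanSpace ℝ (Fin n))))) hqq'
    simp only [hΦ, mkchar_apply] at h1
    have h2 : Complex.exp (2 * Real.pi * Complex.I * ((u q - u q' : ℝ) : ℂ)) = 1 := by
      rw [Complex.ofReal_sub, mul_sub, Complex.exp_sub]
      rw [div_eq_one_iff_eq (Complex.exp_ne_zero _)]
      simpa using h1
    obtain ⟨m, hm⟩ := exp_two_pi_eq_one h2
    refine ⟨m, ?_⟩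
    have h6 : ρ q - ρ q' = (u q - u q') • α := by
      have h4 : ρ q - u q • α = ρ q' - u q' • α := by
        have := hwq; rw [hw] at this; exact this
      have h5 : ρ q - ρ q' = u q • α - u q' • α := by
        linear_combination (norm := module) h4
      rw [h5, sub_smul]
    rw [h6, hm]
  -- special points
  set p : ℤ → EuclideanSpace ℝ (Fin n) → EuclideanSpace ℝ (Fin n) :=
    fun k y => ((1/2 + (k:ℝ))/A) • α + (y - (⟪α,y⟫/A) • α) with hp
  have hαx : ∀ (k : ℤ) (y : EuclideanSpace ℝ (Fin n)), ⟪α, p k y⟫ = 1/2 + (k:ℝ) := by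
    intro k y
    rw [hp]
    simp only
    rw [inner_add_right, inner_sub_right, real_inner_smul_right, real_inner_smul_right, ← hA]
    field_simp
    ring
  have hcos : ∀ (k : ℤ) (y : EuclideanSpace ℝ (Fin n)),
      Real.cos (Real.pi * ⟪α, p k y⟫) = 0 := by
    intro k y
    rw [hαx, Real.cos_eq_zero_iff]
    exact ⟨k, by push_cast; ring⟩
  have hinner : ∀ (q : ι) (k : ℤ) (y : EuclideanSpace ℝ (Fin n)),
      ⟪ρ q, p k y⟫ = u q / 2 + ((k:ℝ) * u q + ⟪w q, y⟫) := by
    intro q k y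
    rw [hp, hw, hu]
    simp only
    rw [inner_add_right, inner_sub_right, real_inner_smul_right, real_inner_smul_right,
      inner_sub_left, real_inner_smul_left]
    have hcomm : ⟪α, ρ q⟫ = ⟪ρ q, α⟫ := real_inner_comm _ _
    field_simp
    ring
  have hρx : ∀ (q : ι) (k : ℤ) (y : EuclideanSpace ℝ (Fin n)),
      e (ρ q) (p k y)
        = Complex.exp (2 * Real.pi * Complex.I * ((u q / 2 : ℝ) : ℂ))
          * (Φ q) (Multiplicative.ofAdd (k, y)) := by
    intro q k y
    rw [hΦ]
    simp only
    rw [mkchar_apply, e, ← Complex.exp_add]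
    congr 1
    rw [hinner q k y]
    push_cast
    ring
  set d : ι → ℂ := fun q => Complex.exp (2 * Real.pi * Complex.I * ((u q / 2 : ℝ) : ℂ)) * c q
    with hd
  have hsum0 : ∑ q, d q • (⇑(Φ q) : Multiplicative (ℤ × EuclideanSpace ℝ (Fin n)) → ℂ) = 0 := by
    funext pt
    set k : ℤ := (Multiplicative.toAdd pt).1 with hk
    set y : EuclideanSpace ℝ (Fin n) := (Multiplicative.toAdd pt).2 with hy
    have hpt : pt = Multiplicative.ofAdd (k, y) := rfl
    have hv := hvan (p k y) (hcos k y)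
    have : ∑ q, d q • (⇑(Φ q) : Multiplicative (ℤ × EuclideanSpace ℝ (Fin n)) → ℂ) pt
        = ∑ q, c q * e (ρ q) (p k y) := by
      refine Finset.sum_congr rfl (fun q _ => ?_)
      rw [hρx q k y, hd, hpt]
      simp only [smul_eq_mul]
      ring
    calc (∑ q, d q • (⇑(Φ q) : Multiplicative (ℤ × EuclideanSpace ℝ (Fin n)) → ℂ)) pt
        = ∑ q, d q • (⇑(Φ q) : Multiplicative (ℤ × EuclideanSpace ℝ (Fin n)) → ℂ) pt := by
          rw [Finset.sum_apply]; rfl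
      _ = ∑ q, c q * e (ρ q) (p k y) := this
      _ = 0 := hv
  have li := (linearIndependent_monoidHom (Multiplicative (ℤ × EuclideanSpace ℝ (Fin n))) ℂ).comp
    Φ hΦinj
  have hz := Fintype.linearIndependent_iff.mp li d hsum0
  intro q
  have hdq := hz q
  rw [hd] at hdq
  simp only [mul_eq_zero] at hdq
  rcases hdq with h | h
  · exact absurd h (Complex.exp_ne_zero _)
  · exact h


-- Step 1 : per-class structure
lemma step1 (α : EuclideanSpace ℝ (Fin n)) (hα0 : α ≠ 0)
    (s0 : Finset (EuclideanSpace ℝ (Fin n))) (a : EuclideanSpace ℝ (Fin n) → ℂ)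
    (π' : EuclideanSpace ℝ (Fin n) →+ (EuclideanSpace ℝ (Fin n) ⧸ AddSubgroup.zmultiples α))
    (hπ' : π' = QuotientAddGroup.mk' (AddSubgroup.zmultiples α))
    (q : EuclideanSpace ℝ (Fin n) ⧸ AddSubgroup.zmultiples α) (hq : q ∈ s0.image π') :
    ∃ (ρ : EuclideanSpace ℝ (Fin n)) (M : ℕ) (Q : Polynomial ℂ),
      ρ ∈ s0 ∧ π' ρ = q ∧ (∃ μ ∈ s0, μ = ρ + (M : ℝ) • α) ∧ Q.natDegree ≤ M ∧
      ∀ x, ∑ ω ∈ s0.filter (fun ω => π' ω = q), a ω * e ω x = e ρ x * Q.eval (e α x) := by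
  classical
  set A : ℝ := ⟪α, α⟫ with hA
  have hA0 : 0 < A := inner_self_pos' hα0
  set Cq := s0.filter (fun ω => π' ω = q) with hCq
  obtain ⟨ω₀, hω₀s, hω₀q⟩ := Finset.mem_image.mp hq
  have hCne : Cq.Nonempty := ⟨ω₀, Finset.mem_filter.mpr ⟨hω₀s, hω₀q⟩⟩
  obtain ⟨ρ, hρC, hρmin⟩ := Finset.exists_min_image Cq (fun ω => ⟪ω, α⟫) hCne
  obtain ⟨μ, hμC, hμmax⟩ := Finset.exists_max_image Cq (fun ω => ⟪ω, α⟫) hCne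
  have hρs : ρ ∈ s0 := (Finset.mem_filter.mp hρC).1
  have hρq : π' ρ = q := (Finset.mem_filter.mp hρC).2
  -- each element of Cq is ρ + j • α with j : ℕ
  have hrep : ∀ ω : EuclideanSpace ℝ (Fin n), ∃ j : ℕ, ω ∈ Cq → ω = ρ + (j : ℝ) • α := by
    intro ω
    by_cases hω : ω ∈ Cq
    · have hωq : π' ω = q := (Finset.mem_filter.mp hω).2
      have hmk : QuotientAddGroup.mk' (AddSubgroup.zmultiples α) ρ
          = QuotientAddGroup.mk' (AddSubgroup.zmultiples α) ω := by
        rw [← hπ', hρq, hωq]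
      obtain ⟨z, hzmem, hz⟩ := (QuotientAddGroup.mk'_eq_mk' (AddSubgroup.zmultiples α)).mp hmk
      obtain ⟨j, hj⟩ := (AddSubgroup.mem_zmultiples_iff).mp hzmem
      -- ρ + z = ω, z = j • α
      have hωρ : ω = ρ + (j : ℝ) • α := by
        rw [← hz, ← hj, Int.cast_smul_eq_zsmul]
      -- j ≥ 0
      have hjA : ⟪ρ, α⟫ + (j : ℝ) * A = ⟪ω, α⟫ := by
        rw [hωρ, inner_add_left, real_inner_smul_left, hA]
      have hj0 : (0:ℝ) ≤ (j:ℝ) := by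
        nlinarith [hρmin ω hω]
      have hj0' : (0:ℤ) ≤ j := by exact_mod_cast hj0
      refine ⟨j.toNat, fun _ => ?_⟩
      rw [hωρ]
      congr 2
      exact_mod_cast (Int.toNat_of_nonneg hj0').symm
    · exact ⟨0, fun h => absurd h hω⟩
  choose m hm using hrep
  set M := m μ with hM
  have hμρ : μ = ρ + (M : ℝ) • α := hm μ hμC
  have hle : ∀ ω ∈ Cq, m ω ≤ M := by
    intro ω hω
    have h1 : ⟪ω, α⟫ = ⟪ρ, α⟫ + (m ω : ℝ) * A := by
      conv_lhs => rw [hm ω hω]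
      rw [inner_add_left, real_inner_smul_left, hA]
    have h2 : ⟪μ, α⟫ = ⟪ρ, α⟫ + (M : ℝ) * A := by
      conv_lhs => rw [hμρ]
      rw [inner_add_left, real_inner_smul_left, hA]
    have h3 := hμmax ω hω
    have : (m ω : ℝ) ≤ (M : ℝ) := by nlinarith
    exact_mod_cast this
  refine ⟨ρ, M, ∑ ω ∈ Cq, C (a ω) * X ^ (m ω), hρs, hρq, ⟨μ, (Finset.mem_filter.mp hμC).1, hμρ⟩,
    ?_, ?_⟩
  · exact natDegree_sum_le_of_forall_le _ _ (fun ω hω =>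
      le_trans (natDegree_C_mul_X_pow_le _ _) (hle ω hω))
  · intro x
    rw [eval_finset_sum, Finset.mul_sum]
    refine Finset.sum_congr rfl (fun ω hω => ?_)
    rw [eval_mul, eval_C, eval_pow, eval_X]
    have he : e ω x = e ρ x * e α x ^ m ω := by
      conv_lhs => rw [hm ω hω]
      rw [e_add, e_nsmul]
    rw [he]
    ring


lemma step3 (Q : Polynomial ℂ) (M : ℕ) (hdeg : Q.natDegree ≤ M) (h1 : Q.eval (-1) = 0) :
    ∃ P : Polynomial ℂ, P.natDegree ≤ M ∧
      ∀ z : ℂ, (z + 1) * P.eval z = -Complex.I * (z - 1) * Q.eval z := by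
  have hdvd : (X - C (-1)) ∣ Q := dvd_iff_isRoot.mpr h1
  have hXC : (X - C (-1) : Polynomial ℂ) = X + 1 := by
    rw [map_neg, map_one, sub_neg_eq_add]
  rw [hXC] at hdvd
  obtain ⟨R, hR⟩ := hdvd
  refine ⟨C (-Complex.I) * ((X - 1) * R), ?_, ?_⟩
  · by_cases hR0 : R = 0
    · simp [hR0]
    · have hX1 : (X + 1 : Polynomial ℂ) ≠ 0 := by
        have := monic_X_add_C (1 : ℂ)
        rw [map_one] at this
        exact this.ne_zero
      have hndQ : Q.natDegree = 1 + R.natDegree := by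
        rw [hR, natDegree_mul hX1 hR0]
        congr 1
        have := natDegree_X_add_C (1 : ℂ)
        rwa [map_one] at this
      calc (C (-Complex.I) * ((X - 1) * R)).natDegree
          ≤ (C (-Complex.I)).natDegree + ((X - 1) * R).natDegree := natDegree_mul_le
        _ ≤ 0 + (((X : Polynomial ℂ) - 1).natDegree + R.natDegree) := by
            gcongr
            · simp
            · exact natDegree_mul_le
        _ ≤ 1 + R.natDegree := by
            have : (X - 1 : Polynomial ℂ).natDegree = 1 := by
              have := natDegree_X_sub_C (1 : ℂ)
              rwa [map_one] at this
            omega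
        _ ≤ M := by omega
  · intro z
    rw [hR]
    simp only [eval_mul, eval_add, eval_sub, eval_one, eval_X, eval_C]
    ring



lemma e_cos_form (α x : EuclideanSpace ℝ (Fin n)) :
    e α x = (Real.cos (2 * Real.pi * ⟪α, x⟫) : ℂ)
      + (Real.sin (2 * Real.pi * ⟪α, x⟫) : ℂ) * Complex.I := by
  rw [e]
  have : (2 * Real.pi * Complex.I * ((⟪α, x⟫ : ℝ) : ℂ))
      = ((2 * Real.pi * ⟪α, x⟫ : ℝ) : ℂ) * Complex.I := by push_cast; ring
  rw [this, Complex.exp_mul_I, ← Complex.ofReal_cos, ← Complex.ofReal_sin]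

lemma cos_two : ∀ s : ℝ, Real.cos (2 * Real.pi * s) = 2 * Real.cos (Real.pi * s) ^ 2 - 1 := by
  intro s
  have := Real.cos_two_mul (Real.pi * s)
  rw [← this]; ring_nf

lemma sin_two : ∀ s : ℝ, Real.sin (2 * Real.pi * s)
    = 2 * Real.sin (Real.pi * s) * Real.cos (Real.pi * s) := by
  intro s
  have := Real.sin_two_mul (Real.pi * s)
  rw [← this]; ring_nf

lemma e_eq_neg_one_of_cos {α x : EuclideanSpace ℝ (Fin n)}
    (h : Real.cos (Real.pi * ⟪α, x⟫) = 0) : e α x = -1 := by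
  rw [e_cos_form, cos_two, sin_two, h]
  push_cast
  ring

lemma cos_eq_zero_of_e {α x : EuclideanSpace ℝ (Fin n)}
    (h : e α x = -1) : Real.cos (Real.pi * ⟪α, x⟫) = 0 := by
  rw [e_cos_form, cos_two, sin_two] at h
  have hre := congrArg Complex.re h
  simp only [Complex.add_re, Complex.ofReal_re, Complex.mul_I_re, Complex.ofReal_im,
    Complex.neg_re, Complex.one_re] at hre
  nlinarith [hre]

lemma key_identity {α x : EuclideanSpace ℝ (Fin n)} {f : EuclideanSpace ℝ (Fin n) → ℂ}
    {g : EuclideanSpace ℝ (Fin n) → ℝ}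
    (heq : ((g x * Real.cos (Real.pi * ⟪α, x⟫) : ℝ) : ℂ)
      = f x * ((Real.sin (Real.pi * ⟪α, x⟫) : ℝ) : ℂ)) :
    (g x : ℂ) * (e α x + 1) = -Complex.I * (e α x - 1) * f x := by
  rw [e_cos_form, cos_two, sin_two]
  set c := Real.cos (Real.pi * ⟪α, x⟫)
  set s' := Real.sin (Real.pi * ⟪α, x⟫)
  have hgc : (g x : ℂ) * (c : ℂ) = f x * (s' : ℂ) := by
    rw [← heq]; push_cast; ring
  have hpyth : ((c : ℂ)) ^ 2 + ((s' : ℂ)) ^ 2 = 1 := by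
    have := Real.sin_sq_add_cos_sq (Real.pi * ⟪α, x⟫)
    have h2 : (s' : ℝ) ^ 2 + (c : ℝ) ^ 2 = 1 := this
    exact_mod_cast by push_cast [← h2]; ring
  push_cast
  linear_combination (2 * ((c : ℂ) + (s' : ℂ) * Complex.I)) * hgc
    + 2 * Complex.I * (f x) * hpyth + 2 * (c : ℂ) * (s' : ℂ) * (f x) * Complex.I_sq


lemma classdiv (α : EuclideanSpace ℝ (Fin n)) (hα0 : α ≠ 0)
    (s0 : Finset (EuclideanSpace ℝ (Fin n))) (a : EuclideanSpace ℝ (Fin n) → ℂ)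
    (hvan : ∀ x, Real.cos (Real.pi * ⟪α, x⟫) = 0 → ∑ ω ∈ s0, a ω * e ω x = 0) :
    ∃ β : EuclideanSpace ℝ (Fin n) →₀ ℂ,
      (∀ τ ∈ β.support, ∃ ρ ∈ s0, ∃ μ ∈ s0, ∃ k M : ℕ,
        k ≤ M ∧ τ = ρ + (k : ℝ) • α ∧ μ = ρ + (M : ℝ) • α) ∧
      ∀ x, (e α x + 1) * (β.sum fun τ c => c * e τ x)
        = -Complex.I * (e α x - 1) * ∑ ω ∈ s0, a ω * e ω x := by
  classical
  set π' : EuclideanSpace ℝ (Fin n) →+ (EuclideanSpace ℝ (Fin n) ⧸ AddSubgroup.zmultiples α) :=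
    QuotientAddGroup.mk' (AddSubgroup.zmultiples α) with hπ'
  set K := s0.image π' with hK
  have hstep : ∀ q : ↥K, ∃ (ρ : EuclideanSpace ℝ (Fin n)) (M : ℕ) (Q : Polynomial ℂ),
      ρ ∈ s0 ∧ π' ρ = ↑q ∧ (∃ μ ∈ s0, μ = ρ + (M : ℝ) • α) ∧ Q.natDegree ≤ M ∧
      ∀ x, ∑ ω ∈ s0.filter (fun ω => π' ω = ↑q), a ω * e ω x = e ρ x * Q.eval (e α x) :=
    fun q => step1 α hα0 s0 a π' hπ' ↑q q.2
  choose ρf Mf Qf hρs hρq hμex hdeg heval using hstep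
  have hfib : ∀ x, ∑ q : ↥K, (∑ ω ∈ s0.filter (fun ω => π' ω = ↑q), a ω * e ω x)
      = ∑ ω ∈ s0, a ω * e ω x := by
    intro x
    rw [Finset.sum_coe_sort K (fun q => ∑ ω ∈ s0.filter (fun ω => π' ω = q), a ω * e ω x)]
    exact Finset.sum_fiberwise_of_maps_to (fun ω hω => Finset.mem_image_of_mem π' hω) _
  have hf2 : ∀ x, ∑ q : ↥K, e (ρf q) x * (Qf q).eval (e α x) = ∑ ω ∈ s0, a ω * e ω x := by
    intro x
    rw [← hfib x]
    exact Finset.sum_congr rfl fun q _ => (heval q x).symm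
  have hsep : ∀ q q' : ↥K, (∃ j : ℤ, ρf q - ρf q' = (j : ℝ) • α) → q = q' := by
    rintro q q' ⟨j, hj⟩
    have hmk : π' (ρf q) = π' (ρf q') := by
      rw [hπ']
      rw [QuotientAddGroup.mk'_eq_mk' (AddSubgroup.zmultiples α)]
      refine ⟨(-j) • α, AddSubgroup.mem_zmultiples_iff.mpr ⟨-j, rfl⟩, ?_⟩
      rw [← Int.cast_smul_eq_zsmul ℝ]
      push_cast
      linear_combination (norm := module) hj
    have hqq : (↑q : EuclideanSpace ℝ (Fin n) ⧸ AddSubgroup.zmultiples α) = ↑q' := by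
      rw [← hρq q, ← hρq q', hmk]
    exact Subtype.ext hqq
  have hQ1 : ∀ q : ↥K, (Qf q).eval (-1) = 0 := by
    apply claim2 α hα0 ρf (fun q => (Qf q).eval (-1)) hsep
    intro x hx
    have he : e α x = -1 := e_eq_neg_one_of_cos hx
    calc ∑ q : ↥K, (Qf q).eval (-1) * e (ρf q) x
        = ∑ q : ↥K, e (ρf q) x * (Qf q).eval (e α x) := by
          refine Finset.sum_congr rfl fun q _ => ?_
          rw [he]; ring
      _ = ∑ ω ∈ s0, a ω * e ω x := hf2 x
      _ = 0 := hvan x hx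
  have hstep3 : ∀ q : ↥K, ∃ P : Polynomial ℂ, P.natDegree ≤ Mf q ∧ ∀ z : ℂ,
      (z + 1) * P.eval z = -Complex.I * (z - 1) * (Qf q).eval z :=
    fun q => step3 (Qf q) (Mf q) (hdeg q) (hQ1 q)
  choose Pf hPdeg hPev using hstep3
  set β : EuclideanSpace ℝ (Fin n) →₀ ℂ := ∑ q : ↥K, ∑ k ∈ Finset.range (Mf q + 1),
      Finsupp.single (ρf q + (k : ℝ) • α) ((Pf q).coeff k) with hβ
  refine ⟨β, ?_, ?_⟩
  · intro τ hτ
    rw [hβ] at hτ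
    have h1 := Finsupp.support_finset_sum hτ
    obtain ⟨q, -, h2⟩ := Finset.mem_biUnion.mp h1
    have h3 := Finsupp.support_finset_sum h2
    obtain ⟨k, hk, h4⟩ := Finset.mem_biUnion.mp h3
    have h5 := Finsupp.support_single_subset h4
    have hτeq : τ = ρf q + (k : ℝ) • α := Finset.mem_singleton.mp h5
    obtain ⟨μ, hμs, hμeq⟩ := hμex q
    exact ⟨ρf q, hρs q, μ, hμs, k, Mf q, Nat.lt_succ_iff.mp (Finset.mem_range.mp hk), hτeq, hμeq⟩
  · intro x
    have hEx : (β.sum fun τ c => c * e τ x) = ∑ q : ↥K, e (ρf q) x * (Pf q).eval (e α x) := by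
      set Ex : (EuclideanSpace ℝ (Fin n) →₀ ℂ) →+ ℂ :=
        Finsupp.liftAddHom (fun τ => AddMonoidHom.mulRight (e τ x)) with hEx'
      have h0 : (β.sum fun τ c => c * e τ x) = Ex β := by
        rw [hEx', Finsupp.liftAddHom_apply]
        rfl
      rw [h0, hβ, map_sum]
      refine Finset.sum_congr rfl fun q _ => ?_
      rw [map_sum]
      have hterm : ∀ k ∈ Finset.range (Mf q + 1),
          Ex (Finsupp.single (ρf q + (k : ℝ) • α) ((Pf q).coeff k))
            = (Pf q).coeff k * (e (ρf q) x * (e α x) ^ k) := by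
        intro k _
        rw [hEx', Finsupp.liftAddHom_apply_single]
        show (Pf q).coeff k * e (ρf q + (k : ℝ) • α) x = _
        rw [e_add, e_nsmul]
      rw [Finset.sum_congr rfl hterm,
        eval_eq_sum_range' (lt_of_le_of_lt (hPdeg q) (Nat.lt_succ_self _)) (e α x),
        Finset.mul_sum]
      exact Finset.sum_congr rfl fun k _ => by ring
    rw [hEx, ← hf2 x, Finset.mul_sum, Finset.mul_sum]
    refine Finset.sum_congr rfl fun q _ => ?_
    linear_combination e (ρf q) x * hPev q (e α x)

lemma dense_good (α : EuclideanSpace ℝ (Fin n)) (hα0 : α ≠ 0) :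
    Dense {x : EuclideanSpace ℝ (Fin n) | Real.cos (Real.pi * ⟪α, x⟫) ≠ 0} := by
  rw [Metric.dense_iff]
  intro x r hr
  set A : ℝ := ⟪α, α⟫ with hA
  have hA0 : 0 < A := inner_self_pos' hα0
  set c : ℝ := ⟪α, x⟫ with hc
  set ε : ℝ := min (r / (‖α‖ + 1)) (1 / A) with hε
  have hεpos : 0 < ε := lt_min (div_pos hr (by positivity)) (by positivity)
  have hball : ∀ s : ℝ, 0 < s → s ≤ ε → x + s • α ∈ Metric.ball x r := by
    intro s hs hsε
    rw [Metric.mem_ball, dist_eq_norm]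
    have h0 : x + s • α - x = s • α := by abel
    rw [h0, norm_smul, Real.norm_eq_abs, abs_of_pos hs]
    have h1 : s * ‖α‖ ≤ ε * ‖α‖ := by nlinarith [norm_nonneg α]
    have h2 : ε * ‖α‖ < r := by
      have h3 : ε ≤ r / (‖α‖ + 1) := min_le_left _ _
      have h4 : ε * ‖α‖ ≤ r / (‖α‖ + 1) * ‖α‖ := by nlinarith [norm_nonneg α]
      have h5 : r / (‖α‖ + 1) * ‖α‖ < r := by
        rw [div_mul_eq_mul_div, div_lt_iff₀ (by positivity)]
        nlinarith [norm_nonneg α]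
      linarith
    linarith
  have hinner : ∀ s : ℝ, ⟪α, x + s • α⟫ = c + s * A := by
    intro s
    rw [inner_add_right, real_inner_smul_right, ← hA, ← hc]
  by_cases hbad : Real.cos (Real.pi * ⟪α, x + (ε/2) • α⟫) = 0
  · refine ⟨x + (ε/3) • α, hball (ε/3) (by positivity) (by linarith), ?_⟩
    intro hbad2
    rw [hinner, Real.cos_eq_zero_iff] at hbad hbad2
    obtain ⟨k1, hk1⟩ := hbad
    obtain ⟨k2, hk2⟩ := hbad2
    have hπ : (0:ℝ) < Real.pi := Real.pi_pos
    have h1 : c + ε/2 * A = k1 + 1/2 := by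
      have h := hk1
      field_simp at h ⊢
      nlinarith [h]
    have h2 : c + ε/3 * A = k2 + 1/2 := by
      have h := hk2
      field_simp at h ⊢
      nlinarith [h]
    have hd : (ε/6) * A = (k1 : ℝ) - k2 := by linarith
    have hd1 : (0:ℝ) < (k1:ℝ) - k2 := by
      rw [← hd]; positivity
    have hd2 : (k1:ℝ) - k2 < 1 := by
      rw [← hd]
      have hεA : ε * A ≤ 1 := by
        have hm := min_le_right (r / (‖α‖ + 1)) (1 / A)
        rw [← hε] at hm
        calc ε * A ≤ (1/A) * A := by nlinarith
          _ = 1 := by field_simp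
      nlinarith
    have hi1 : (0:ℤ) < k1 - k2 := by exact_mod_cast hd1
    have hi2 : (k1 - k2 : ℤ) < 1 := by exact_mod_cast hd2
    omega
  · exact ⟨x + (ε/2) • α, hball (ε/2) (by positivity) (by linarith), hbad⟩

end Stmt7Aux

open Stmt7Aux

/-- Lemma 7.2 (tangent case): if `f` is a finite real-valued Fourier sum supported on the
dual lattice `Γ*` and `f·tan(π⟨α,·⟩)` extends to a smooth function `g` on `ℝⁿ`, then `g` is
a finite Fourier sum supported on `Γ*` inside the convex hull of the support of `f`. -/
theorem stmt_7 (n : ℕ) (v : Module.Basis (Fin n) ℝ (EuclideanSpace ℝ (Fin n)))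
    (Γ : Set (EuclideanSpace ℝ (Fin n)))
    (hΓ : Γ = Set.range fun m : Fin n → ℤ => ∑ i, (m i : ℝ) • v i)
    (Γd : Set (EuclideanSpace ℝ (Fin n)))
    (hΓd : Γd = {ω : EuclideanSpace ℝ (Fin n) | ∀ γ ∈ Γ, ∃ m : ℤ, ⟪ω, γ⟫ = (m : ℝ)})
    (α : EuclideanSpace ℝ (Fin n)) (hα : α ∈ Γd) (hα0 : α ≠ 0)
    (S : Finset (EuclideanSpace ℝ (Fin n))) (hS : (↑S : Set (EuclideanSpace ℝ (Fin n))) ⊆ Γd)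
    (a : EuclideanSpace ℝ (Fin n) → ℂ) (ha0 : ∀ ω ∉ S, a ω = 0)
    (haconj : ∀ ω, a (-ω) = (starRingEnd ℂ) (a ω))
    (f : EuclideanSpace ℝ (Fin n) → ℂ)
    (hf : ∀ x, f x = ∑ ω ∈ S, a ω * Complex.exp (2 * Real.pi * Complex.I * (⟪ω, x⟫ : ℂ)))
    (g : EuclideanSpace ℝ (Fin n) → ℝ) (hg : ContDiff ℝ (⊤ : ℕ∞) g)
    (heq : ∀ x, ((g x * Real.cos (Real.pi * ⟪α, x⟫) : ℝ) : ℂ)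
      = f x * ((Real.sin (Real.pi * ⟪α, x⟫) : ℝ) : ℂ)) :
    ∃ T : Finset (EuclideanSpace ℝ (Fin n)),
      (↑T : Set (EuclideanSpace ℝ (Fin n))) ⊆ Γd ∧
      (↑T : Set (EuclideanSpace ℝ (Fin n))) ⊆
        convexHull ℝ {ω : EuclideanSpace ℝ (Fin n) | ω ∈ S ∧ a ω ≠ 0} ∧
      ∃ b : EuclideanSpace ℝ (Fin n) → ℂ, ∀ x,
        (g x : ℂ) = ∑ ω ∈ T, b ω * Complex.exp (2 * Real.pi * Complex.I * (⟪ω, x⟫ : ℂ)) := by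
  classical
  set s0 : Finset (EuclideanSpace ℝ (Fin n)) := S.filter (fun ω => a ω ≠ 0) with hs0
  have hfs : ∀ x, f x = ∑ ω ∈ s0, a ω * e ω x := by
    intro x
    rw [hf x, hs0]
    exact (Finset.sum_filter_of_ne (fun ω _ hne => left_ne_zero_of_mul hne)).symm
  -- f vanishes where the cosine vanishes
  have hvan : ∀ x, Real.cos (Real.pi * ⟪α, x⟫) = 0 → ∑ ω ∈ s0, a ω * e ω x = 0 := by
    intro x hx
    have h1 := heq x
    rw [hx, mul_zero, Complex.ofReal_zero] at h1
    have hsin : Real.sin (Real.pi * ⟪α, x⟫) ≠ 0 := by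
      intro hs
      have := Real.sin_sq_add_cos_sq (Real.pi * ⟪α, x⟫)
      rw [hx, hs] at this
      norm_num at this
    have hsin' : ((Real.sin (Real.pi * ⟪α, x⟫) : ℝ) : ℂ) ≠ 0 :=
      Complex.ofReal_ne_zero.mpr hsin
    have hf0 : f x = 0 := by
      rcases mul_eq_zero.mp h1.symm with h | h
      · exact h
      · exact absurd h hsin'
    rw [← hfs x, hf0]
  obtain ⟨β, hsupp, hident⟩ := classdiv α hα0 s0 a hvan
  refine ⟨β.support, ?_, ?_, ⇑β, ?_⟩
  · -- support in dual lattice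
    intro τ hτ
    obtain ⟨ρ, hρ, μ, hμ, k, M, hkM, hτeq, hμeq⟩ := hsupp τ (by exact_mod_cast hτ)
    have hρΓd : ρ ∈ Γd := hS (Finset.mem_coe.mpr (Finset.mem_of_mem_filter ρ hρ))
    rw [hΓd] at hρΓd hα ⊢
    intro γ hγ
    obtain ⟨m1, hm1⟩ := hρΓd γ hγ
    obtain ⟨m2, hm2⟩ := hα γ hγ
    refine ⟨m1 + k * m2, ?_⟩
    rw [hτeq, inner_add_left, real_inner_smul_left, hm1, hm2]
    push_cast
    ring
  · -- support in convex hull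
    intro τ hτ
    obtain ⟨ρ, hρ, μ, hμ, k, M, hkM, hτeq, hμeq⟩ := hsupp τ (by exact_mod_cast hτ)
    have hset : ∀ ω : EuclideanSpace ℝ (Fin n), ω ∈ s0 →
        ω ∈ {ω : EuclideanSpace ℝ (Fin n) | ω ∈ S ∧ a ω ≠ 0} := by
      intro ω hω
      exact Finset.mem_filter.mp hω
    have hρh := subset_convexHull ℝ _ (hset ρ hρ)
    have hμh := subset_convexHull ℝ _ (hset μ hμ)
    rcases Nat.eq_zero_or_pos M with hM0 | hMpos
    · have hk0 : k = 0 := by omega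
      have : τ = ρ := by rw [hτeq, hk0]; push_cast; rw [zero_smul, add_zero]
      rw [this]; exact hρh
    · set lam : ℝ := (k : ℝ) / (M : ℝ) with hlam
      have hM0 : (M : ℝ) ≠ 0 := Nat.cast_ne_zero.mpr (by omega)
      have hlam0 : 0 ≤ lam := by positivity
      have hlam1 : lam ≤ 1 := by
        rw [hlam, div_le_one (by positivity)]
        exact_mod_cast hkM
      have hcomb := (convex_convexHull ℝ {ω : EuclideanSpace ℝ (Fin n) | ω ∈ S ∧ a ω ≠ 0})
        hρh hμh (by linarith : (0:ℝ) ≤ 1 - lam) hlam0 (by ring)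
      have heqτ : (1 - lam) • ρ + lam • μ = τ := by
        rw [hμeq, hτeq]
        have hlm : lam * (M : ℝ) = (k : ℝ) := by
          rw [hlam]; field_simp
        rw [← hlm]
        module
      rw [← heqτ]
      exact hcomb
  · -- the identity
    intro x
    set F1 : EuclideanSpace ℝ (Fin n) → ℂ := fun x => (g x : ℂ) with hF1
    set F2 : EuclideanSpace ℝ (Fin n) → ℂ := fun x => ∑ τ ∈ β.support, β τ * e τ x with hF2
    have hc1 : Continuous F1 := Complex.continuous_ofReal.comp hg.continuous
    have hc2 : Continuous F2 := by
      refine continuous_finset_sum _ (fun τ _ => continuous_const.mul ?_)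
      exact Complex.continuous_exp.comp (continuous_const.mul
        (Complex.continuous_ofReal.comp (Continuous.inner continuous_const continuous_id)))
    have hEqOn : Set.EqOn F1 F2 {x | Real.cos (Real.pi * ⟪α, x⟫) ≠ 0} := by
      intro y hy
      have hne : e α y + 1 ≠ 0 := by
        intro h0
        exact hy (cos_eq_zero_of_e (eq_neg_of_add_eq_zero_left h0))
      have h1 : (g y : ℂ) * (e α y + 1) = -Complex.I * (e α y - 1) * f y :=
        key_identity (heq y)
      have h1' : (g y : ℂ) * (e α y + 1)
          = -Complex.I * (e α y - 1) * ∑ ω ∈ s0, a ω * e ω y := by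
        rw [h1, hfs y]
      have h2 := hident y
      have h3 : (β.sum fun τ c => c * e τ y) = F2 y := rfl
      rw [h3] at h2
      exact mul_right_cancel₀ hne (by linear_combination h1' - h2)
    have hfun : F1 = F2 :=
      Continuous.ext_on (dense_good α hα0) hc1 hc2 hEqOn
    exact congrFun hfun x
end
end
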